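/- arXiv:cs/0507013 — 8 statements merged into one kernel-verified Lean document; each statement's English description precedes it below -/
import Mathlib

section
/- Let S and T be finite sets of real numbers with |S| = |T| = n ≥ 1, and let H(x) = |{s ∈ S : s ≤ x}| − |{t ∈ T : t ≤ x}| be the height function. Then ∫_{−∞}^{+∞} |H(x)| dx = Σ_{k=1}^{n} |s_k − t_k|, where s_k and t_k denote the k-th smallest elements of S and T respectively; that is, the integral of |H| equals the cost of the assignment that maps the k-th smallest element of S to the k-th smallest element of T. -/
open Finset MeasureTheory

/-- The height function `H(x) = |{s ∈ S : s ≤ x}| − |{t ∈ T : t ≤ x}|`. -/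
noncomputable def heightFn (S T : Finset ℝ) (x : ℝ) : ℤ :=
  ((S.filter (fun s => s ≤ x)).card : ℤ) - ((T.filter (fun t => t ≤ x)).card : ℤ)

lemma card_filter_le_eq (S : Finset ℝ) {n : ℕ} (hS : S.card = n) (x : ℝ) :
    (S.filter (fun s => s ≤ x)).card
      = ∑ k : Fin n, (if S.orderEmbOfFin hS k ≤ x then 1 else 0) := by
  have himg : Finset.image (S.orderEmbOfFin hS) Finset.univ = S := by
    ext a
    simp only [Finset.mem_image, Finset.mem_univ, true_and]
    constructor
    · rintro ⟨k, rfl⟩; exact S.orderEmbOfFin_mem hS k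
    · intro ha
      have h1 := S.range_orderEmbOfFin hS
      have h2 : a ∈ Set.range (S.orderEmbOfFin hS) := by rw [h1]; exact ha
      exact h2
  rw [← Finset.card_filter]
  conv_lhs => rw [← himg]
  rw [Finset.filter_image, Finset.card_image_of_injective _ (S.orderEmbOfFin hS).injective]

lemma term_abs_eq_indicator (s t x : ℝ) :
    ((|(if s ≤ x then (1 : ℤ) else 0) - (if t ≤ x then 1 else 0)| : ℤ) : ℝ)
      = Set.indicator (Set.Ico (min s t) (max s t)) (fun _ => (1 : ℝ)) x := by
  rcases le_total s t with h | h
  · rw [min_eq_left h, max_eq_right h]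
    by_cases h1 : s ≤ x <;> by_cases h2 : t ≤ x
    · have : ¬ (s ≤ x ∧ x < t) := fun hc => absurd h2 (not_le.2 hc.2)
      simp [Set.indicator_apply, Set.mem_Ico, h1, h2, this]
    · have : s ≤ x ∧ x < t := ⟨h1, not_le.1 h2⟩
      simp [Set.indicator_apply, Set.mem_Ico, h1, h2, this]
    · exact absurd (h.trans h2) h1
    · have : ¬ (s ≤ x ∧ x < t) := fun hc => absurd hc.1 h1
      simp [Set.indicator_apply, Set.mem_Ico, h1, h2, this]
  · rw [min_eq_right h, max_eq_left h]
    by_cases h1 : s ≤ x <;> by_cases h2 : t ≤ x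
    · have : ¬ (t ≤ x ∧ x < s) := fun hc => absurd h1 (not_le.2 hc.2)
      simp [Set.indicator_apply, Set.mem_Ico, h1, h2, this]
    · exact absurd (h.trans h1) h2
    · have : t ≤ x ∧ x < s := ⟨h2, not_le.1 h1⟩
      simp [Set.indicator_apply, Set.mem_Ico, h1, h2, this]
    · have : ¬ (t ≤ x ∧ x < s) := fun hc => absurd hc.1 h2
      simp [Set.indicator_apply, Set.mem_Ico, h1, h2, this]

/-- For finite sets `S` and `T` of reals of equal cardinality `n ≥ 1`,
the integral of `|H|` over the real line equals the cost of the assignment mapping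
the `k`-th smallest element of `S` to the `k`-th smallest element of `T`. -/
theorem integral_abs_height_eq_sorted_cost (S T : Finset ℝ) (n : ℕ) (hn : 1 ≤ n)
    (hS : S.card = n) (hT : T.card = n) :
    ∫ x : ℝ, |(heightFn S T x : ℝ)| =
      ∑ k : Fin n, |S.orderEmbOfFin hS k - T.orderEmbOfFin hT k| := by
  set e := S.orderEmbOfFin hS with he
  set f := T.orderEmbOfFin hT with hf
  set g : Fin n → ℝ → ℤ := fun k x => (if e k ≤ x then 1 else 0) - (if f k ≤ x then 1 else 0)
    with hg
  have hsum : ∀ x, heightFn S T x = ∑ k : Fin n, g k x := by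
    intro x
    unfold heightFn
    rw [card_filter_le_eq S hS x, card_filter_le_eq T hT x]
    push_cast
    rw [← Finset.sum_sub_distrib]
  have hsign : ∀ x, (∀ k, 0 ≤ g k x) ∨ (∀ k, g k x ≤ 0) := by
    intro x
    by_cases hpos : ∀ k, 0 ≤ g k x
    · exact Or.inl hpos
    · right
      push_neg at hpos
      obtain ⟨j, hj⟩ := hpos
      have hj' : f j ≤ x ∧ ¬ e j ≤ x := by
        by_contra h
        simp only [hg] at hj
        split_ifs at hj with h1 h2 h2 <;> [omega; omega; exact h ⟨h2, h1⟩; omega]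
      intro k
      simp only [hg]
      split_ifs with h1 h2 h2 <;> try omega
      exfalso
      rcases le_total k j with hkj | hkj
      · exact h2 (le_trans (f.monotone hkj) hj'.1)
      · exact hj'.2 (le_trans (e.monotone hkj) h1)
  have habs : ∀ x, |(heightFn S T x : ℝ)| = ∑ k : Fin n, (|g k x| : ℝ) := by
    intro x
    have key : |∑ k : Fin n, g k x| = ∑ k : Fin n, |g k x| := by
      rcases hsign x with h | h
      · rw [abs_of_nonneg (Finset.sum_nonneg fun k _ => h k)]
        exact Finset.sum_congr rfl fun k _ => (abs_of_nonneg (h k)).symm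
      · rw [abs_of_nonpos (Finset.sum_nonpos fun k _ => h k), ← Finset.sum_neg_distrib]
        exact Finset.sum_congr rfl fun k _ => (abs_of_nonpos (h k)).symm
    calc |((heightFn S T x : ℤ) : ℝ)| = ((|heightFn S T x| : ℤ) : ℝ) := (Int.cast_abs).symm
      _ = ((∑ k : Fin n, |g k x| : ℤ) : ℝ) := by rw [hsum x, key]
      _ = ∑ k : Fin n, (|g k x| : ℝ) := by push_cast; rfl
  have hind : ∀ (x : ℝ), |(heightFn S T x : ℝ)| = ∑ k : Fin n,
      Set.indicator (Set.Ico (min (e k) (f k)) (max (e k) (f k))) (fun _ => (1 : ℝ)) x := by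
    intro x
    rw [habs x]
    refine Finset.sum_congr rfl fun k _ => ?_
    rw [← Int.cast_abs]
    exact term_abs_eq_indicator (e k) (f k) x
  have hfun : (fun x : ℝ => |(heightFn S T x : ℝ)|) = fun x => ∑ k : Fin n,
      Set.indicator (Set.Ico (min (e k) (f k)) (max (e k) (f k))) (fun _ => (1 : ℝ)) x :=
    funext hind
  rw [hfun]
  have hintk : ∀ k : Fin n, Integrable
      (Set.indicator (Set.Ico (min (e k) (f k)) (max (e k) (f k))) (fun _ => (1 : ℝ))) := by
    intro k
    rw [integrable_indicator_iff measurableSet_Ico]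
    exact integrableOn_const measure_Ico_lt_top.ne
  rw [integral_finset_sum _ (fun k _ => hintk k)]
  refine Finset.sum_congr rfl fun k _ => ?_
  rw [integral_indicator_const (1 : ℝ) measurableSet_Ico, measureReal_def, Real.volume_Ico, smul_eq_mul, mul_one,
    ENNReal.toReal_ofReal (sub_nonneg.2 min_le_max), max_sub_min_eq_abs]
  exact abs_sub_comm _ _
end

section
/- Let S and T be finite sets of real numbers with S ∩ T = ∅ and |S| ≥ |T| ≥ 1. There exists an assignment A : S → T of minimum cost (i.e., cost(A) ≤ cost(A') for every assignment A') that has no crossings, i.e., there are no a, b ∈ S with a < b and A(b) < A(a). -/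
open Finset

/-- An assignment from `S` to `T`: every point of `S` maps to a point of `T`, and
every point of `T` is hit. -/
def IsAssignment (S T : Finset ℝ) (A : ℝ → ℝ) : Prop :=
  (∀ s ∈ S, A s ∈ T) ∧ ∀ t ∈ T, ∃ s ∈ S, A s = t

lemma swap_le (a b t t' : ℝ) (hab : a < b) (htt : t' < t) :
    |a - t'| + |b - t| ≤ |a - t| + |b - t'| := by
  rcases le_total a t' with h1 | h1 <;> rcases le_total a t with h2 | h2 <;>
  rcases le_total b t' with h3 | h3 <;> rcases le_total b t with h4 | h4 <;>
  simp_all [abs_of_nonneg, abs_of_nonpos, sub_nonneg, sub_nonpos, abs_sub_comm] <;> linarith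

lemma omega_finite (S T : Finset ℝ) (t0 : ℝ) :
    {A : ℝ → ℝ | (∀ s ∈ S, A s ∈ T) ∧ ∀ x ∉ S, A x = t0}.Finite := by
  have hF : (Set.univ.pi (fun _ : ↥S => (↑T : Set ℝ))).Finite :=
    Set.Finite.pi (fun _ => T.finite_toSet)
  apply Set.Finite.of_finite_image (f := fun A (s : ↥S) => A s)
  · apply hF.subset
    rintro g ⟨A, ⟨h1, h2⟩, rfl⟩ s _
    exact h1 s s.2
  · intro A hA B hB h
    funext x
    by_cases hx : x ∈ S
    · exact congrFun h ⟨x, hx⟩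
    · rw [hA.2 x hx, hB.2 x hx]

lemma omega_nonempty (S T : Finset ℝ) (hST : T.card ≤ S.card) (t0 : ℝ) (ht0 : t0 ∈ T) :
    ∃ A : ℝ → ℝ, ((∀ s ∈ S, A s ∈ T) ∧ ∀ t ∈ T, ∃ s ∈ S, A s = t) ∧ ∀ x ∉ S, A x = t0 := by
  classical
  have hcard : Fintype.card ↥T ≤ Fintype.card ↥S := by
    simpa [Fintype.card_coe] using hST
  obtain ⟨j⟩ := Function.Embedding.nonempty_of_card_le hcard
  set A : ℝ → ℝ := fun x => if h : ∃ t : ↥T, ((j t : ℝ)) = x then (h.choose : ℝ) else t0 with hA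
  have hmem : ∀ x, A x ∈ T := by
    intro x
    by_cases h : ∃ t : ↥T, ((j t : ℝ)) = x
    · rw [hA]; dsimp only; rw [dif_pos h]; exact (Exists.choose h).2
    · rw [hA]; dsimp only; rw [dif_neg h]; exact ht0
  refine ⟨A, ⟨fun s _ => hmem s, ?_⟩, ?_⟩
  · intro t ht
    refine ⟨(j ⟨t, ht⟩ : ℝ), (j ⟨t, ht⟩).2, ?_⟩
    have h : ∃ t' : ↥T, ((j t' : ℝ)) = (j ⟨t, ht⟩ : ℝ) := ⟨⟨t, ht⟩, rfl⟩
    have := h.choose_spec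
    have hc : h.choose = ⟨t, ht⟩ := j.injective (Subtype.coe_injective this)
    rw [hA]; dsimp only; rw [dif_pos h, hc]
  · intro x hx
    by_cases h : ∃ t : ↥T, ((j t : ℝ)) = x
    · exact absurd (h.choose_spec ▸ (j h.choose).2) hx
    · rw [hA]; dsimp only; rw [dif_neg h]

lemma sum_split (S : Finset ℝ) (a b : ℝ) (ha : a ∈ S) (hb : b ∈ S) (hne : a ≠ b)
    (g : ℝ → ℝ) : ∑ s ∈ S, g s = g a + g b + ∑ s ∈ (S.erase a).erase b, g s := by
  rw [← Finset.add_sum_erase _ _ ha,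
      ← Finset.add_sum_erase _ _ (Finset.mem_erase.mpr ⟨hne.symm, hb⟩)]
  ring


/-- there exists a minimum-cost assignment with no crossings. -/
theorem exists_min_cost_assignment_no_crossing (S T : Finset ℝ)
    (hdisj : Disjoint S T) (hST : T.card ≤ S.card) (hT : 1 ≤ T.card) :
    ∃ A : ℝ → ℝ, IsAssignment S T A ∧
      (∀ A' : ℝ → ℝ, IsAssignment S T A' →
        ∑ s ∈ S, |s - A s| ≤ ∑ s ∈ S, |s - A' s|) ∧
      ∀ a ∈ S, ∀ b ∈ S, a < b → ¬ A b < A a := by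
  classical
  obtain ⟨t0, ht0⟩ := Finset.card_pos.mp hT
  set P : (ℝ → ℝ) → Prop := fun A =>
    ((∀ s ∈ S, A s ∈ T) ∧ ∀ t ∈ T, ∃ s ∈ S, A s = t) ∧ ∀ x ∉ S, A x = t0 with hP
  have hfin : {A : ℝ → ℝ | P A}.Finite := by
    apply (omega_finite S T t0).subset
    rintro A ⟨⟨h1, _⟩, h2⟩
    exact ⟨h1, h2⟩
  set Ω := hfin.toFinset with hΩ
  have hΩmem : ∀ A, A ∈ Ω ↔ P A := fun A => by
    simp [hΩ, Set.Finite.mem_toFinset]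
  obtain ⟨A0, hA01, hA02⟩ := omega_nonempty S T hST t0 ht0
  have hΩne : Ω.Nonempty := ⟨A0, (hΩmem A0).mpr ⟨hA01, hA02⟩⟩
  set c : (ℝ → ℝ) → ℝ := fun A => ∑ s ∈ S, |s - A s| with hc
  obtain ⟨A1, hA1Ω, hA1min⟩ := Finset.exists_min_image Ω c hΩne
  set Ω2 := Ω.filter (fun A => c A = c A1) with hΩ2
  have hΩ2ne : Ω2.Nonempty := ⟨A1, Finset.mem_filter.mpr ⟨hA1Ω, rfl⟩⟩
  obtain ⟨A, hAΩ2, hAmax⟩ := Finset.exists_max_image Ω2 (fun A => ∑ s ∈ S, s * A s) hΩ2ne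
  have hAΩ := (Finset.mem_filter.mp hAΩ2).1
  have hAc : c A = c A1 := (Finset.mem_filter.mp hAΩ2).2
  have hAP : P A := (hΩmem A).mp hAΩ
  have hmin : ∀ A' : ℝ → ℝ, IsAssignment S T A' → c A ≤ c A' := by
    intro A' hA'
    set B : ℝ → ℝ := fun x => if x ∈ S then A' x else t0 with hB
    have hBP : P B := by
      refine ⟨⟨fun s hs => ?_, fun t ht => ?_⟩, fun x hx => if_neg hx⟩
      · simpa [hB, if_pos hs] using hA'.1 s hs
      · obtain ⟨s, hs, h⟩ := hA'.2 t ht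
        exact ⟨s, hs, by simpa [hB, if_pos hs] using h⟩
    have hcB : c B = c A' := Finset.sum_congr rfl (fun s hs => by simp [hB, if_pos hs])
    calc c A = c A1 := hAc
      _ ≤ c B := hA1min B ((hΩmem B).mpr hBP)
      _ = c A' := hcB
  refine ⟨A, hAP.1, hmin, ?_⟩
  intro a ha b hb hab hcross
  set B : ℝ → ℝ := fun x => if x = a then A b else if x = b then A a else A x with hB
  have hne : a ≠ b := ne_of_lt hab
  have hBa : B a = A b := if_pos rfl
  have hBb : B b = A a := by simp [hB, hne.symm]
  have hBrest : ∀ x, x ≠ a → x ≠ b → B x = A x := fun x h1 h2 => by simp [hB, h1, h2]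
  have hBP : P B := by
    refine ⟨⟨fun s hs => ?_, fun t ht => ?_⟩, fun x hx => ?_⟩
    · by_cases h1 : s = a
      · rw [h1, hBa]; exact hAP.1.1 b hb
      · by_cases h2 : s = b
        · rw [h2, hBb]; exact hAP.1.1 a ha
        · rw [hBrest s h1 h2]; exact hAP.1.1 s hs
    · obtain ⟨s, hs, h⟩ := hAP.1.2 t ht
      by_cases h1 : s = a
      · exact ⟨b, hb, by rw [hBb, ← h1, h]⟩
      · by_cases h2 : s = b
        · exact ⟨a, ha, by rw [hBa, ← h2, h]⟩
        · exact ⟨s, hs, by rw [hBrest s h1 h2, h]⟩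
    · have h1 : x ≠ a := fun h => hx (h ▸ ha)
      have h2 : x ≠ b := fun h => hx (h ▸ hb)
      rw [hBrest x h1 h2]; exact hAP.2 x hx
  have hrest_cost : ∀ s ∈ (S.erase a).erase b, |s - B s| = |s - A s| := by
    intro s hs
    obtain ⟨h2, h1, _⟩ := Finset.mem_erase.mp hs |>.imp id (Finset.mem_erase.mp)
    rw [hBrest s h1 h2]
  have hcB : c B ≤ c A := by
    rw [hc]
    dsimp only
    rw [sum_split S a b ha hb hne (fun s => |s - B s|),
        sum_split S a b ha hb hne (fun s => |s - A s|),
        Finset.sum_congr rfl hrest_cost, hBa, hBb]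
    have := swap_le a b (A a) (A b) hab hcross
    linarith
  have hBΩ2 : B ∈ Ω2 := by
    refine Finset.mem_filter.mpr ⟨(hΩmem B).mpr hBP, le_antisymm ?_ (hA1min B ((hΩmem B).mpr hBP))⟩
    calc c B ≤ c A := hcB
      _ = c A1 := hAc
  have hφ := hAmax B hBΩ2
  have hrest_phi : ∀ s ∈ (S.erase a).erase b, s * B s = s * A s := by
    intro s hs
    obtain ⟨h2, h1, _⟩ := Finset.mem_erase.mp hs |>.imp id (Finset.mem_erase.mp)
    rw [hBrest s h1 h2]
  rw [sum_split S a b ha hb hne (fun s => s * B s),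
      sum_split S a b ha hb hne (fun s => s * A s),
      Finset.sum_congr rfl hrest_phi, hBa, hBb] at hφ
  nlinarith [mul_pos (sub_pos.mpr hab) (sub_pos.mpr hcross)]
end

section
/- Let S and T be finite sets of real numbers with S ∩ T = ∅ and |S| ≥ |T| ≥ 1, and let A : S → T be an assignment of minimum cost. If t ∈ T is such that A⁻¹(t) = {s ∈ S : A(s) = t} contains at least two elements, then for every s ∈ A⁻¹(t): (1) t is a nearest neighbor of s, i.e., |s − t| ≤ |s − t'| for all t' ∈ T; and (2) no point of T lies strictly between s and t, i.e., there is no t' ∈ T with min(s,t) < t' < max(s,t). -/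
open Finset

/-- in a minimum-cost assignment, if some `t ∈ T` receives at least two
points of `S`, then every `s` assigned to `t` has `t` as a nearest neighbor in `T`,
and no point of `T` lies strictly between `s` and `t`. -/
theorem min_cost_multi_assigned_nearest (S T : Finset ℝ)
    (hdisj : Disjoint S T) (hST : T.card ≤ S.card) (hT : 1 ≤ T.card)
    (A : ℝ → ℝ) (hA : IsAssignment S T A)
    (hmin : ∀ A' : ℝ → ℝ, IsAssignment S T A' →
      ∑ s ∈ S, |s - A s| ≤ ∑ s ∈ S, |s - A' s|)
    (t : ℝ) (ht : t ∈ T) (hmulti : 2 ≤ (S.filter (fun s => A s = t)).card) :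
    ∀ s ∈ S, A s = t →
      (∀ t' ∈ T, |s - t| ≤ |s - t'|) ∧
      ¬ ∃ t' ∈ T, min s t < t' ∧ t' < max s t := by
  intro s hs hAs
  have hst : s ≠ t := fun h => (Finset.disjoint_left.mp hdisj hs) (h ▸ ht)
  have key : ∀ t' ∈ T, |s - t| ≤ |s - t'| := by
    intro t' ht'
    set A' : ℝ → ℝ := fun x => if x = s then t' else A x with hA'def
    have hassign : IsAssignment S T A' := by
      constructor
      · intro x hx
        by_cases h : x = s
        · simp only [A', h, if_pos rfl]; exact ht'
        · simp only [A', if_neg h]; exact hA.1 x hx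
      · intro u hu
        by_cases hu' : u = t
        · obtain ⟨s₂, hs₂, hs₂ne⟩ :=
            Finset.exists_mem_ne (by omega :
              1 < (S.filter (fun x => A x = t)).card) s
          have h1 := Finset.mem_filter.mp hs₂
          exact ⟨s₂, h1.1, by simp only [A', if_neg hs₂ne]; rw [h1.2, hu']⟩
        · obtain ⟨s₀, hs₀, hAs₀⟩ := hA.2 u hu
          have hne : s₀ ≠ s := fun h => hu' (by rw [← hAs₀, h, hAs])
          exact ⟨s₀, hs₀, by simp only [A', if_neg hne]; exact hAs₀⟩
    have hcost := hmin A' hassign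
    have e1 : ∑ x ∈ S, |x - A x| = |s - t| + ∑ x ∈ S.erase s, |x - A x| := by
      rw [← Finset.add_sum_erase S (fun x => |x - A x|) hs, hAs]
    have e2 : ∑ x ∈ S, |x - A' x| = |s - t'| + ∑ x ∈ S.erase s, |x - A x| := by
      rw [← Finset.add_sum_erase S (fun x => |x - A' x|) hs]
      congr 1
      · simp [A']
      · apply Finset.sum_congr rfl
        intro x hx
        have : x ≠ s := Finset.ne_of_mem_erase hx
        simp [A', this]
    rw [e1, e2] at hcost
    linarith
  refine ⟨key, ?_⟩
  rintro ⟨t', ht', h1, h2⟩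
  have hlt : |s - t'| < |s - t| := by
    rcases lt_or_gt_of_ne hst with h | h
    · rw [min_eq_left h.le] at h1
      rw [max_eq_right h.le] at h2
      rw [abs_of_nonpos (by linarith), abs_of_nonpos (by linarith)]; linarith
    · rw [min_eq_right h.le] at h1
      rw [max_eq_left h.le] at h2
      rw [abs_of_nonneg (by linarith), abs_of_nonneg (by linarith)]; linarith
  exact absurd (key t' ht') (not_le.mpr hlt)
end

section
/- Let S and T be finite sets of real numbers with S ∩ T = ∅ and |S| > |T| ≥ 1. For every subset R ⊆ S with |R| = |S| − |T|, the cost of the assignment A_R equals Σ_{r ∈ R} |r − N(r)| + ∫_{−∞}^{+∞} |H_R(x)| dx. -/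
open Finset MeasureTheory

/-- `N` assigns to each point of `S` a nearest neighbor in `T`. -/
def IsNearestNeighbor (S T : Finset ℝ) (N : ℝ → ℝ) : Prop :=
  ∀ s ∈ S, N s ∈ T ∧ ∀ t ∈ T, |s - N s| ≤ |s - t|

/-- `A` is the assignment `A_R`: it maps each `r ∈ R` to its nearest neighbor `N r`,
and maps the `k`-th smallest element of `S \ R` to the `k`-th smallest element of
`T`. -/
def IsAR (S T R : Finset ℝ) (N A : ℝ → ℝ) : Prop :=
  (∀ r ∈ R, A r = N r) ∧
  ∃ h : (S \ R).card = T.card,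
    ∀ k : Fin T.card, A ((S \ R).orderEmbOfFin h k) = T.orderEmbOfFin rfl k

lemma image_orderEmbOfFin' {n : ℕ} (s : Finset ℝ) (h : s.card = n) :
    Finset.univ.image (s.orderEmbOfFin h) = s := by
  apply Finset.coe_injective
  rw [Finset.coe_image, Finset.coe_univ, Set.image_univ, Finset.range_orderEmbOfFin]

lemma sum_orderEmbOfFin' {n : ℕ} (s : Finset ℝ) (h : s.card = n) (g : ℝ → ℝ) :
    ∑ x ∈ s, g x = ∑ k : Fin n, g (s.orderEmbOfFin h k) := by
  have := Finset.sum_image (f := g) (g := fun k => s.orderEmbOfFin h k)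
    (s := (Finset.univ : Finset (Fin n)))
    (fun a _ b _ hab => (s.orderEmbOfFin h).injective hab)
  rwa [image_orderEmbOfFin' s h] at this

/-- the elementary step function for a pair. -/
noncomputable def stepPair (a b x : ℝ) : ℝ :=
  (if a ≤ x then (1:ℝ) else 0) - (if b ≤ x then (1:ℝ) else 0)

lemma stepPair_pos {a b x : ℝ} (h : 0 < stepPair a b x) : a ≤ x ∧ x < b := by
  unfold stepPair at h
  by_cases h1 : a ≤ x <;> by_cases h2 : b ≤ x <;>
    simp [h1, h2] at h ⊢ <;> first | exact not_le.1 h2 | exact h1 | skip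
  · exact absurd h (by norm_num)

lemma stepPair_neg {a b x : ℝ} (h : stepPair a b x < 0) : b ≤ x ∧ x < a := by
  have : 0 < stepPair b a x := by unfold stepPair at h ⊢; linarith
  exact stepPair_pos this

lemma abs_stepPair (a b x : ℝ) :
    |stepPair a b x| = Set.indicator (Set.Ico (min a b) (max a b)) (fun _ => (1:ℝ)) x := by
  unfold stepPair
  rw [Set.indicator_apply]
  by_cases h1 : a ≤ x <;> by_cases h2 : b ≤ x
  · rw [if_pos h1, if_pos h2,
      if_neg (fun hm => absurd (Set.mem_Ico.1 hm).2 (not_lt.2 (max_le h1 h2)))]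
    norm_num
  · rw [if_pos h1, if_neg h2, if_pos (Set.mem_Ico.2
      ⟨le_trans (min_le_left a b) h1, lt_max_iff.2 (Or.inr (not_le.1 h2))⟩)]
    norm_num
  · rw [if_neg h1, if_pos h2, if_pos (Set.mem_Ico.2
      ⟨le_trans (min_le_right a b) h2, lt_max_iff.2 (Or.inl (not_le.1 h1))⟩)]
    norm_num
  · rw [if_neg h1, if_neg h2,
      if_neg (fun hm => absurd (Set.mem_Ico.1 hm).1
        (not_le.2 (lt_min (not_le.1 h1) (not_le.1 h2))))]
    norm_num

lemma integral_abs_stepPair (a b : ℝ) :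
    ∫ x : ℝ, |stepPair a b x| = |a - b| := by
  simp only [abs_stepPair]
  rw [MeasureTheory.integral_indicator_const (1:ℝ) measurableSet_Ico]
  rw [measureReal_def, Real.volume_Ico, smul_eq_mul, mul_one, ENNReal.toReal_ofReal (by simp [min_le_max])]
  rw [max_sub_min_eq_abs, abs_sub_comm]

lemma integrable_abs_stepPair (a b : ℝ) :
    Integrable (fun x => |stepPair a b x|) := by
  simp only [abs_stepPair]
  rw [MeasureTheory.integrable_indicator_iff measurableSet_Ico]
  exact integrableOn_const measure_Ico_lt_top.ne

lemma abs_sum_stepPair {n : ℕ} (e f : Fin n → ℝ) (he : Monotone e) (hf : Monotone f)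
    (x : ℝ) :
    |∑ k : Fin n, stepPair (e k) (f k) x| = ∑ k : Fin n, |stepPair (e k) (f k) x| := by
  by_cases hpos : ∀ k, 0 ≤ stepPair (e k) (f k) x
  · rw [abs_of_nonneg (Finset.sum_nonneg fun k _ => hpos k)]
    exact Finset.sum_congr rfl fun k _ => (abs_of_nonneg (hpos k)).symm
  · push_neg at hpos
    obtain ⟨j, hj⟩ := hpos
    have hneg : ∀ k, stepPair (e k) (f k) x ≤ 0 := by
      intro k
      by_contra hk
      push_neg at hk
      obtain ⟨hek, hfk⟩ := stepPair_pos hk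
      obtain ⟨hfj, hej⟩ := stepPair_neg hj
      rcases le_total k j with hkj | hkj
      · exact absurd (le_trans (hf hkj) hfj) (not_le.2 hfk)
      · exact absurd (le_trans (he hkj) hek) (not_le.2 hej)
    rw [abs_of_nonpos (Finset.sum_nonpos fun k _ => hneg k), ← Finset.sum_neg_distrib]
    exact Finset.sum_congr rfl fun k _ => (abs_of_nonpos (hneg k)).symm

/-- for every `R ⊆ S` with `|R| = |S| − |T|`, the cost of the assignment
`A_R` equals `Σ_{r ∈ R} |r − N(r)| + ∫ |H_R(x)| dx`, where `H_R` is the height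
function of the pair `(S \ R, T)`. -/
theorem cost_AR_eq (S T : Finset ℝ)
    (hdisj : Disjoint S T) (hST : T.card < S.card) (hT : 1 ≤ T.card)
    (N : ℝ → ℝ) (hN : IsNearestNeighbor S T N)
    (R : Finset ℝ) (hR : R ⊆ S) (hcard : R.card = S.card - T.card)
    (A : ℝ → ℝ) (hA : IsAR S T R N A) :
    ∑ s ∈ S, |s - A s| =
      (∑ r ∈ R, |r - N r|) + ∫ x : ℝ, |(heightFn (S \ R) T x : ℝ)| := by
  obtain ⟨hAR, h, hk⟩ := hA
  set n := T.card with hn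
  set e : Fin n → ℝ := fun k => (S \ R).orderEmbOfFin h k with he
  set f : Fin n → ℝ := fun k => T.orderEmbOfFin rfl k with hf
  -- split the sum
  have hsplit : ∑ s ∈ S, |s - A s| =
      (∑ s ∈ S \ R, |s - A s|) + ∑ r ∈ R, |r - A r| := (Finset.sum_sdiff hR).symm
  have hRsum : ∑ r ∈ R, |r - A r| = ∑ r ∈ R, |r - N r| :=
    Finset.sum_congr rfl fun r hr => by rw [hAR r hr]
  -- the matched part
  have hmatch : ∑ s ∈ S \ R, |s - A s| = ∑ k : Fin n, |e k - f k| := by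
    rw [sum_orderEmbOfFin' (S \ R) h (fun s => |s - A s|)]
    exact Finset.sum_congr rfl fun k _ => by rw [hk k]
  -- height function as a sum of stepPairs
  have hheight : ∀ x : ℝ, ((heightFn (S \ R) T x : ℝ)) =
      ∑ k : Fin n, stepPair (e k) (f k) x := by
    intro x
    unfold heightFn stepPair
    push_cast
    rw [Finset.card_filter, Finset.card_filter]
    push_cast
    rw [sum_orderEmbOfFin' (S \ R) h (fun s => if s ≤ x then (1:ℝ) else 0),
      sum_orderEmbOfFin' T rfl (fun t => if t ≤ x then (1:ℝ) else 0), ← Finset.sum_sub_distrib]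
  -- rewrite the integrand
  have hint : (fun x : ℝ => |(heightFn (S \ R) T x : ℝ)|) =
      fun x => ∑ k : Fin n, |stepPair (e k) (f k) x| := by
    funext x
    rw [hheight x]
    exact abs_sum_stepPair e f ((( S \ R).orderEmbOfFin h).monotone)
      ((T.orderEmbOfFin rfl).monotone) x
  rw [hsplit, hRsum, hmatch, hint, add_comm]
  congr 1
  rw [MeasureTheory.integral_finset_sum _ (fun k _ => integrable_abs_stepPair (e k) (f k))]
  exact Finset.sum_congr rfl fun k _ => (integral_abs_stepPair (e k) (f k)).symm
end

section
/- Let S and T be finite sets of real numbers with S ∩ T = ∅ and |S| > |T| ≥ 1. Suppose R ⊆ S with |R| = |S| − |T| satisfies: (i) for every k with 1 ≤ k ≤ |S| − |T|, the k-th smallest element of R has height k (that is, H(r_k) = k); and (ii) R minimizes the quantity Σ_{r ∈ R'} |r − N(r)| + ∫_{−∞}^{+∞} |H_{R'}(x)| dx over all subsets R' ⊆ S with |R'| = |S| − |T| whose k-th smallest element has height k for every k. Then A_R is an assignment of minimum cost from S to T. -/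
open Finset MeasureTheory

/-- `R` has `|S| − |T|` elements and its `k`-th smallest element has height `k`. -/
def HeightCond (S T R : Finset ℝ) : Prop :=
  ∃ h : R.card = S.card - T.card,
    ∀ k : Fin (S.card - T.card), heightFn S T (R.orderEmbOfFin h k) = (k : ℤ) + 1

/-- The quantity `Σ_{r ∈ R} |r − N(r)| + ∫ |H_R(x)| dx`. -/
noncomputable def removeCost (S T R : Finset ℝ) (N : ℝ → ℝ) : ℝ :=
  (∑ r ∈ R, |r - N r|) + ∫ x : ℝ, |(heightFn (S \ R) T x : ℝ)|


namespace ARAux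


noncomputable def g (s t x : ℝ) : ℝ := (if s ≤ x then 1 else 0) - (if t ≤ x then 1 else 0)

lemma g_eq (s t : ℝ) : g s t = fun x =>
    (Set.Ico s t).indicator (fun _ => (1:ℝ)) x - (Set.Ico t s).indicator (fun _ => (1:ℝ)) x := by
  funext x
  simp only [g, Set.indicator_apply, Set.mem_Ico]
  rcases le_or_gt s x with h1 | h1 <;> rcases le_or_gt t x with h2 | h2
  · simp [h1, h2, not_lt.mpr h1, not_lt.mpr h2]
  · simp [h1, h2, not_le.mpr h2, not_lt.mpr h1]
  · simp [h2, not_le.mpr h1, h1]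
  · simp [not_le.mpr h1, not_le.mpr h2]

lemma integrable_g (s t : ℝ) : Integrable (g s t) := by
  rw [g_eq]
  apply Integrable.sub <;>
  · rw [integrable_indicator_iff measurableSet_Ico]
    apply (integrableOn_const_iff).mpr
    exact Or.inr (by rw [Real.volume_Ico]; exact ENNReal.ofReal_lt_top)

lemma abs_g_eq (s t : ℝ) : (fun x => |g s t x|) =
    (Set.Ico (min s t) (max s t)).indicator (fun _ => (1:ℝ)) := by
  funext x
  simp only [g, Set.indicator_apply, Set.mem_Ico]
  rcases le_or_gt s x with h1 | h1 <;> rcases le_or_gt t x with h2 | h2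
  · simp [h1, h2, not_lt.mpr (max_le h1 h2)]
  · simp [h1, not_le.mpr h2, le_trans (min_le_left s t) h1, lt_of_lt_of_le h2 (le_max_right s t)]
  · simp [h2, not_le.mpr h1, le_trans (min_le_right s t) h2, lt_of_lt_of_le h1 (le_max_left s t)]
  · simp [not_le.mpr h1, not_le.mpr h2, not_le.mpr (lt_min h1 h2)]

lemma integrable_abs_g (s t : ℝ) : Integrable (fun x => |g s t x|) := (integrable_g s t).abs

lemma integral_abs_g (s t : ℝ) : ∫ x, |g s t x| = |s - t| := by
  rw [abs_g_eq, integral_indicator_const (1:ℝ) measurableSet_Ico, Real.volume_real_Ico_of_le min_le_max, smul_eq_mul, mul_one,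
    max_sub_min_eq_abs, abs_sub_comm]

lemma height_repr (P Q : Finset ℝ) (x : ℝ) :
    (heightFn P Q x : ℝ) = (∑ p ∈ P, (if p ≤ x then (1:ℝ) else 0)) - ∑ q ∈ Q, (if q ≤ x then (1:ℝ) else 0) := by
  rw [heightFn, card_filter, card_filter]
  push_cast [apply_ite (fun n : ℕ => (n : ℝ))]
  norm_num

lemma g_pos {s t x : ℝ} (h : 0 < g s t x) : s ≤ x ∧ x < t := by
  have h1 : s ≤ x := by
    by_contra h1
    by_cases h2 : t ≤ x <;> simp [g, h1, h2] at h <;> linarith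
  refine ⟨h1, ?_⟩
  by_contra h2
  rw [not_lt] at h2
  simp [g, h1, h2] at h

lemma g_neg {s t x : ℝ} (h : g s t x < 0) : x < s ∧ t ≤ x := by
  have h2 : t ≤ x := by
    by_contra h2
    by_cases h1 : s ≤ x <;> simp [g, h1, h2] at h <;> linarith
  refine ⟨?_, h2⟩
  by_contra h1
  rw [not_lt] at h1
  simp [g, h1, h2] at h

lemma sum_image_orderEmbOfFin {M : Type*} [AddCommMonoid M] {P : Finset ℝ} {m : ℕ} (hP : P.card = m) (f : ℝ → M) :
    ∑ p ∈ P, f p = ∑ k : Fin m, f (P.orderEmbOfFin hP k) := by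
  have himg : Finset.image (P.orderEmbOfFin hP) Finset.univ = P := by
    ext p
    simp only [Finset.mem_image, Finset.mem_univ, true_and]
    constructor
    · rintro ⟨k, rfl⟩; exact Finset.orderEmbOfFin_mem P hP k
    · intro hp
      exact (Set.ext_iff.mp (Finset.range_orderEmbOfFin P hP) p).mpr (Finset.mem_coe.mpr hp)
  have := Finset.sum_image (s := Finset.univ) (g := fun k => P.orderEmbOfFin hP k) (f := f)
    (fun a _ b _ hab => (P.orderEmbOfFin hP).injective hab)
  rw [himg] at this
  simpa using this

lemma height_sum_pair (P Q : Finset ℝ) {m : ℕ} (hP : P.card = m) (hQ : Q.card = m) (x : ℝ) :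
    (heightFn P Q x : ℝ) = ∑ k : Fin m, g (P.orderEmbOfFin hP k) (Q.orderEmbOfFin hQ k) x := by
  rw [height_repr]
  simp only [g, Finset.sum_sub_distrib]
  rw [sum_image_orderEmbOfFin hP (fun p => if p ≤ x then (1:ℝ) else 0),
    sum_image_orderEmbOfFin hQ (fun q => if q ≤ x then (1:ℝ) else 0)]

lemma height_sum_fn (M T : Finset ℝ) (f : ℝ → ℝ) (himg : M.image f = T)
    (hinj : ∀ x ∈ M, ∀ y ∈ M, f x = f y → x = y) (x : ℝ) :
    (heightFn M T x : ℝ) = ∑ s ∈ M, g s (f s) x := by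
  rw [height_repr]
  simp only [g, Finset.sum_sub_distrib]
  rw [← himg, Finset.sum_image hinj]

lemma integrable_height_pair (P Q : Finset ℝ) (h : P.card = Q.card) :
    Integrable (fun x => (heightFn P Q x : ℝ)) := by
  have heq : (fun x => (heightFn P Q x : ℝ)) =
      fun x => ∑ k : Fin Q.card, g (P.orderEmbOfFin h k) (Q.orderEmbOfFin rfl k) x := by
    funext x; exact height_sum_pair P Q h rfl x
  rw [heq]
  exact integrable_finset_sum _ (fun i _ => integrable_g _ _)

lemma integral_abs_height_le (M T : Finset ℝ) (f : ℝ → ℝ) (himg : M.image f = T)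
    (hinj : ∀ x ∈ M, ∀ y ∈ M, f x = f y → x = y) :
    ∫ x, |(heightFn M T x : ℝ)| ≤ ∑ s ∈ M, |s - f s| := by
  have hcard : M.card = T.card := by
    rw [← himg]; exact (Finset.card_image_of_injOn (fun a ha b hb => hinj a ha b hb)).symm
  have hint : Integrable (fun x => (heightFn M T x : ℝ)) := integrable_height_pair M T hcard
  calc ∫ x, |(heightFn M T x : ℝ)| ≤ ∫ x, ∑ s ∈ M, |g s (f s) x| := by
        apply integral_mono hint.abs (integrable_finset_sum _ fun i _ => integrable_abs_g _ _)
        intro x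
        show |(heightFn M T x : ℝ)| ≤ ∑ s ∈ M, |g s (f s) x|
        rw [height_sum_fn M T f himg hinj x]
        exact Finset.abs_sum_le_sum_abs _ _
    _ = ∑ s ∈ M, ∫ x, |g s (f s) x| := integral_finset_sum _ (fun i _ => integrable_abs_g _ _)
    _ = ∑ s ∈ M, |s - f s| := Finset.sum_congr rfl (fun s _ => integral_abs_g s (f s))

lemma abs_height_sorted (P Q : Finset ℝ) {m : ℕ} (hP : P.card = m) (hQ : Q.card = m) (x : ℝ) :
    |(heightFn P Q x : ℝ)| = ∑ k : Fin m, |g (P.orderEmbOfFin hP k) (Q.orderEmbOfFin hQ k) x| := by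
  rw [height_sum_pair P Q hP hQ x]
  have hsign : (∀ k : Fin m, 0 ≤ g (P.orderEmbOfFin hP k) (Q.orderEmbOfFin hQ k) x) ∨
      (∀ k : Fin m, g (P.orderEmbOfFin hP k) (Q.orderEmbOfFin hQ k) x ≤ 0) := by
    by_contra hcon
    push_neg at hcon
    obtain ⟨⟨j, hj⟩, k, hk⟩ := hcon
    obtain ⟨hj1, hj2⟩ := g_neg hj
    obtain ⟨hk1, hk2⟩ := g_pos hk
    rcases le_total j k with hjk | hjk
    · exact absurd (le_trans ((P.orderEmbOfFin hP).monotone hjk) hk1) (not_le.mpr hj1)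
    · exact absurd (le_trans ((Q.orderEmbOfFin hQ).monotone hjk) hj2) (not_le.mpr hk2)
  rcases hsign with h | h
  · rw [abs_of_nonneg (Finset.sum_nonneg fun k _ => h k)]
    exact Finset.sum_congr rfl fun k _ => (abs_of_nonneg (h k)).symm
  · rw [abs_of_nonpos (Finset.sum_nonpos fun k _ => h k), ← Finset.sum_neg_distrib]
    exact Finset.sum_congr rfl fun k _ => (abs_of_nonpos (h k)).symm

lemma integral_abs_height_sorted (P Q : Finset ℝ) {m : ℕ} (hP : P.card = m) (hQ : Q.card = m) :
    ∫ x, |(heightFn P Q x : ℝ)| = ∑ k : Fin m, |P.orderEmbOfFin hP k - Q.orderEmbOfFin hQ k| := by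
  calc ∫ x, |(heightFn P Q x : ℝ)|
      = ∫ x, ∑ k : Fin m, |g (P.orderEmbOfFin hP k) (Q.orderEmbOfFin hQ k) x| := by
        congr 1; funext x; exact abs_height_sorted P Q hP hQ x
    _ = ∑ k : Fin m, ∫ x, |g (P.orderEmbOfFin hP k) (Q.orderEmbOfFin hQ k) x| :=
        integral_finset_sum _ (fun i _ => integrable_abs_g _ _)
    _ = _ := Finset.sum_congr rfl (fun k _ => integral_abs_g _ _)



lemma card_filter_swap (S' : Finset ℝ) (r₀ s₁ x : ℝ) (hr₀ : r₀ ∉ S') (hs₁ : s₁ ∈ S') :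
    ((Finset.filter (fun s => s ≤ x) (insert r₀ (S'.erase s₁))).card : ℤ) =
    ((Finset.filter (fun s => s ≤ x) S').card : ℤ)
      + (if r₀ ≤ x then 1 else 0) - (if s₁ ≤ x then 1 else 0) := by
  rw [Finset.filter_insert, Finset.filter_erase]
  by_cases h1 : r₀ ≤ x <;> by_cases h2 : s₁ ≤ x
  · have hm : s₁ ∈ Finset.filter (fun s => s ≤ x) S' := Finset.mem_filter.mpr ⟨hs₁, h2⟩
    have h3 : r₀ ∉ (Finset.filter (fun s => s ≤ x) S').erase s₁ := by
      intro hc; exact hr₀ (Finset.mem_of_mem_filter _ (Finset.mem_of_mem_erase hc))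
    rw [if_pos h1, Finset.card_insert_of_notMem h3, Finset.card_erase_of_mem hm]
    have : 1 ≤ (Finset.filter (fun s => s ≤ x) S').card := Finset.card_pos.mpr ⟨s₁, hm⟩
    simp [h1, h2]
    omega
  · have hm : s₁ ∉ Finset.filter (fun s => s ≤ x) S' := fun hc => h2 (Finset.mem_filter.mp hc).2
    have h3 : r₀ ∉ (Finset.filter (fun s => s ≤ x) S').erase s₁ := by
      intro hc; exact hr₀ (Finset.mem_of_mem_filter _ (Finset.mem_of_mem_erase hc))
    rw [if_pos h1, Finset.card_insert_of_notMem h3, Finset.erase_eq_of_notMem hm]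
    simp [h1, h2]
  · have hm : s₁ ∈ Finset.filter (fun s => s ≤ x) S' := Finset.mem_filter.mpr ⟨hs₁, h2⟩
    rw [if_neg h1, Finset.card_erase_of_mem hm]
    have : 1 ≤ (Finset.filter (fun s => s ≤ x) S').card := Finset.card_pos.mpr ⟨s₁, hm⟩
    simp [h1, h2]
    omega
  · have hm : s₁ ∉ Finset.filter (fun s => s ≤ x) S' := fun hc => h2 (Finset.mem_filter.mp hc).2
    rw [if_neg h1, Finset.erase_eq_of_notMem hm]
    simp [h1, h2]

lemma sdiff_swap (S R'' : Finset ℝ) (r₀ s₁ : ℝ) (hsub : R'' ⊆ S) (hr₀ : r₀ ∈ R'')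
    (hs₁ : s₁ ∈ S \ R'') :
    S \ (insert s₁ (R''.erase r₀)) = insert r₀ ((S \ R'').erase s₁) := by
  have hr₀S : r₀ ∈ S := hsub hr₀
  have hs₁S : s₁ ∈ S := (Finset.mem_sdiff.mp hs₁).1
  have hs₁R : s₁ ∉ R'' := (Finset.mem_sdiff.mp hs₁).2
  have hne : r₀ ≠ s₁ := fun h => hs₁R (h ▸ hr₀)
  ext y
  simp only [Finset.mem_sdiff, Finset.mem_insert, Finset.mem_erase]
  constructor
  · rintro ⟨hyS, hy⟩
    push_neg at hy
    obtain ⟨hy1, hy2⟩ := hy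
    by_cases h : y = r₀
    · exact Or.inl h
    · exact Or.inr ⟨hy1, hyS, fun hc => (hy2 h) hc⟩
  · rintro (rfl | ⟨hy1, hyS, hy2⟩)
    · exact ⟨hr₀S, by push_neg; exact ⟨hne, fun h => absurd rfl h⟩⟩
    · exact ⟨hyS, by push_neg; exact ⟨hy1, fun _ => hy2⟩⟩

lemma height_swap (S T R'' : Finset ℝ) (r₀ s₁ : ℝ) (hsub : R'' ⊆ S) (hr₀ : r₀ ∈ R'')
    (hs₁ : s₁ ∈ S \ R'') (x : ℝ) :
    heightFn (S \ (insert s₁ (R''.erase r₀))) T x =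
      heightFn (S \ R'') T x + (if r₀ ≤ x then 1 else 0) - (if s₁ ≤ x then 1 else 0) := by
  rw [sdiff_swap S R'' r₀ s₁ hsub hr₀ hs₁]
  have hr₀' : r₀ ∉ S \ R'' := fun hc => (Finset.mem_sdiff.mp hc).2 hr₀
  unfold heightFn
  rw [card_filter_swap (S \ R'') r₀ s₁ x hr₀' hs₁]
  ring


lemma integrable_indicator_Ico (u v : ℝ) :
    Integrable ((Set.Ico u v).indicator (fun _ => (1:ℝ))) := by
  rw [integrable_indicator_iff measurableSet_Ico]
  apply (integrableOn_const_iff).mpr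
  exact Or.inr (by rw [Real.volume_Ico]; exact ENNReal.ofReal_lt_top)

lemma integral_indicator_Ico (u v : ℝ) (h : u ≤ v) :
    ∫ x, (Set.Ico u v).indicator (fun _ => (1:ℝ)) x = v - u := by
  rw [integral_indicator_const (1:ℝ) measurableSet_Ico, Real.volume_real_Ico_of_le h, smul_eq_mul, mul_one]

lemma swap_core (S T : Finset ℝ) (N : ℝ → ℝ)
    (hN : ∀ s ∈ S, N s ∈ T ∧ ∀ t ∈ T, |s - N s| ≤ |s - t|)
    (R'' : Finset ℝ) (hsub : R'' ⊆ S) (hScard : (S \ R'').card = T.card)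
    (r₀ : ℝ) (hr₀ : r₀ ∈ R'') (s₁ : ℝ) (hs₁ : s₁ ∈ S \ R'')
    (habs : ∀ x : ℝ, |(heightFn (S \ (insert s₁ (R''.erase r₀))) T x : ℝ)| =
      |(heightFn (S \ R'') T x : ℝ)| -
        (Set.Ico (min s₁ r₀) (max s₁ r₀)).indicator (fun _ => (1:ℝ)) x) :
    ∃ R' : Finset ℝ, R' ⊆ S ∧ R'.card = R''.card ∧
      ((∑ r ∈ R', |r - N r|) + ∫ x, |(heightFn (S \ R') T x : ℝ)| ≤
        (∑ r ∈ R'', |r - N r|) + ∫ x, |(heightFn (S \ R'') T x : ℝ)|) ∧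
      ∫ x, |(heightFn (S \ R') T x : ℝ)| < ∫ x, |(heightFn (S \ R'') T x : ℝ)| := by
  have hs₁S : s₁ ∈ S := (Finset.mem_sdiff.mp hs₁).1
  have hs₁R : s₁ ∉ R'' := (Finset.mem_sdiff.mp hs₁).2
  have hr₀S : r₀ ∈ S := hsub hr₀
  have hne : s₁ ≠ r₀ := fun h => hs₁R (h ▸ hr₀)
  set R' := insert s₁ (R''.erase r₀) with hR'
  have hs₁e : s₁ ∉ R''.erase r₀ := fun hc => hs₁R (Finset.mem_of_mem_erase hc)
  have hsub' : R' ⊆ S :=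
    Finset.insert_subset hs₁S ((Finset.erase_subset _ _).trans hsub)
  have hcard' : R'.card = R''.card := by
    rw [hR', Finset.card_insert_of_notMem hs₁e, Finset.card_erase_of_mem hr₀]
    have : 1 ≤ R''.card := Finset.card_pos.mpr ⟨r₀, hr₀⟩
    omega
  have hScard' : (S \ R').card = T.card := by
    rw [Finset.card_sdiff_of_subset hsub', hcard', ← Finset.card_sdiff_of_subset hsub, hScard]
  have hKint : Integrable (fun x => (heightFn (S \ R'') T x : ℝ)) :=
    integrable_height_pair _ _ hScard
  have hK'int : Integrable (fun x => (heightFn (S \ R') T x : ℝ)) :=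
    integrable_height_pair _ _ hScard'
  have humax : min s₁ r₀ < max s₁ r₀ := min_lt_max.mpr hne
  have hIeq : (fun x => |(heightFn (S \ R') T x : ℝ)|) = fun x =>
      |(heightFn (S \ R'') T x : ℝ)| -
        (Set.Ico (min s₁ r₀) (max s₁ r₀)).indicator (fun _ => (1:ℝ)) x := funext habs
  have hIntval : ∫ x, |(heightFn (S \ R') T x : ℝ)| =
      (∫ x, |(heightFn (S \ R'') T x : ℝ)|) - (max s₁ r₀ - min s₁ r₀) := by
    rw [show (fun x => |(heightFn (S \ R') T x : ℝ)|) = _ from hIeq]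
    rw [integral_sub hKint.abs (integrable_indicator_Ico _ _),
      integral_indicator_Ico _ _ humax.le]
  have hsum : (∑ r ∈ R', |r - N r|) =
      (∑ r ∈ R'', |r - N r|) - |r₀ - N r₀| + |s₁ - N s₁| := by
    rw [hR', Finset.sum_insert hs₁e]
    have := Finset.sum_erase_add R'' (fun r => |r - N r|) hr₀
    have h2 : ∑ r ∈ R''.erase r₀, |r - N r| = (∑ r ∈ R'', |r - N r|) - |r₀ - N r₀| := by
      linarith [this]
    rw [h2]; ring
  have hNbound : |s₁ - N s₁| ≤ (max s₁ r₀ - min s₁ r₀) + |r₀ - N r₀| := by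
    have h1 : |s₁ - N s₁| ≤ |s₁ - N r₀| := (hN s₁ hs₁S).2 (N r₀) (hN r₀ hr₀S).1
    have h2 : |s₁ - N r₀| ≤ |s₁ - r₀| + |r₀ - N r₀| := by
      have := abs_sub_abs_le_abs_sub (s₁ - N r₀) (r₀ - N r₀)
      calc |s₁ - N r₀| = |(s₁ - r₀) + (r₀ - N r₀)| := by ring_nf
        _ ≤ |s₁ - r₀| + |r₀ - N r₀| := abs_add_le _ _
    have h3 : max s₁ r₀ - min s₁ r₀ = |s₁ - r₀| := by
      rw [max_sub_min_eq_abs, abs_sub_comm]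
    linarith
  refine ⟨R', hsub', hcard', ?_, ?_⟩
  · rw [hIntval, hsum]; linarith
  · rw [hIntval]; linarith

lemma swap (S T : Finset ℝ) (N : ℝ → ℝ)
    (hN : ∀ s ∈ S, N s ∈ T ∧ ∀ t ∈ T, |s - N s| ≤ |s - t|)
    (R'' : Finset ℝ) (hsub : R'' ⊆ S) (hScard : (S \ R'').card = T.card)
    (r₀ : ℝ) (hr₀ : r₀ ∈ R'') (hne : heightFn (S \ R'') T r₀ ≠ 0) :
    ∃ R' : Finset ℝ, R' ⊆ S ∧ R'.card = R''.card ∧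
      ((∑ r ∈ R', |r - N r|) + ∫ x, |(heightFn (S \ R') T x : ℝ)| ≤
        (∑ r ∈ R'', |r - N r|) + ∫ x, |(heightFn (S \ R'') T x : ℝ)|) ∧
      ∫ x, |(heightFn (S \ R') T x : ℝ)| < ∫ x, |(heightFn (S \ R'') T x : ℝ)| := by
  set S' := S \ R'' with hS'
  have hr₀S : r₀ ∈ S := hsub hr₀
  have hr₀S' : r₀ ∉ S' := fun hc => (Finset.mem_sdiff.mp hc).2 hr₀
  rcases hne.lt_or_gt with hc | hc
  · -- heightFn S' T r₀ < 0 : take b = min of S' points ≥ r₀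
    have hfilne : (S'.filter (fun s => r₀ ≤ s)).Nonempty := by
      by_contra hno
      rw [Finset.not_nonempty_iff_eq_empty] at hno
      have hall : ∀ s ∈ S', s ≤ r₀ := by
        intro s hs
        by_contra hlt
        have : s ∈ S'.filter (fun s => r₀ ≤ s) :=
          Finset.mem_filter.mpr ⟨hs, (not_le.mp hlt).le⟩
        rw [hno] at this; exact absurd this (Finset.notMem_empty s)
      have h1 : S'.filter (fun s => s ≤ r₀) = S' := by
        apply Finset.filter_true_of_mem hall
      have h2 : ((T.filter (fun t => t ≤ r₀)).card : ℤ) ≤ T.card :=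
        Int.ofNat_le.mpr (Finset.card_le_card (Finset.filter_subset _ _))
      unfold heightFn at hc
      rw [h1] at hc
      rw [← hScard] at h2
      omega
    set b := (S'.filter (fun s => r₀ ≤ s)).min' hfilne with hb
    have hbmem : b ∈ S'.filter (fun s => r₀ ≤ s) := Finset.min'_mem _ _
    have hbS' : b ∈ S' := (Finset.mem_filter.mp hbmem).1
    have hrb : r₀ ≤ b := (Finset.mem_filter.mp hbmem).2
    have hrb' : r₀ < b := lt_of_le_of_ne hrb (fun h => hr₀S' (h ▸ hbS'))
    have hminb : ∀ s ∈ S', r₀ ≤ s → b ≤ s := fun s hs hrs =>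
      Finset.min'_le _ s (Finset.mem_filter.mpr ⟨hs, hrs⟩)
    have hK : ∀ z, r₀ ≤ z → z < b → heightFn S' T z ≤ -1 := by
      intro z h1 h2
      have hfe : S'.filter (fun s => s ≤ z) = S'.filter (fun s => s ≤ r₀) := by
        ext s
        simp only [Finset.mem_filter, and_congr_right_iff]
        intro hs
        constructor
        · intro hsz
          by_contra hsr
          have := hminb s hs (not_le.mp hsr).le
          linarith
        · intro hsr; linarith
      have hTm : (T.filter (fun t => t ≤ r₀)).card ≤ (T.filter (fun t => t ≤ z)).card :=
        Finset.card_le_card (Finset.monotone_filter_right T (fun t _ ht => le_trans ht h1))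
      unfold heightFn at hc ⊢
      rw [hfe]
      omega
    apply swap_core S T N hN R'' hsub hScard r₀ hr₀ b hbS'
    intro x
    rw [height_swap S T R'' r₀ b hsub hr₀ hbS' x]
    rw [min_eq_right hrb'.le, max_eq_left hrb'.le]
    by_cases h1 : r₀ ≤ x
    · by_cases h2 : b ≤ x
      · rw [if_pos h1, if_pos h2]
        rw [Set.indicator_apply, if_neg (by simp [Set.mem_Ico]; intro; linarith)]
        push_cast; ring_nf
      · rw [if_pos h1, if_neg h2]
        have hKx := hK x h1 (not_le.mp h2)
        rw [Set.indicator_apply, if_pos (Set.mem_Ico.mpr ⟨h1, not_le.mp h2⟩)]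
        have h3 : (heightFn S' T x : ℝ) ≤ -1 := by exact_mod_cast hKx
        rw [abs_of_nonpos (by push_cast; linarith), abs_of_nonpos (by linarith)]
        push_cast; ring
    · have h2 : ¬ b ≤ x := fun hc2 => h1 (hrb.trans hc2)
      rw [if_neg h1, if_neg h2]
      rw [Set.indicator_apply, if_neg (by simp [Set.mem_Ico]; intro hcc; linarith)]
      push_cast; ring_nf
  · -- 0 < heightFn S' T r₀ : take a = max of S' points ≤ r₀
    have hfilne : (S'.filter (fun s => s ≤ r₀)).Nonempty := by
      apply Finset.card_pos.mp
      unfold heightFn at hc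
      omega
    set a := (S'.filter (fun s => s ≤ r₀)).max' hfilne with ha
    have hamem : a ∈ S'.filter (fun s => s ≤ r₀) := Finset.max'_mem _ _
    have haS' : a ∈ S' := (Finset.mem_filter.mp hamem).1
    have har : a ≤ r₀ := (Finset.mem_filter.mp hamem).2
    have har' : a < r₀ := lt_of_le_of_ne har (fun h => hr₀S' (h ▸ haS'))
    have hmaxa : ∀ s ∈ S', s ≤ r₀ → s ≤ a := by
      intro u hu hur
      exact Finset.le_max' (S'.filter (fun v => v ≤ r₀)) u (Finset.mem_filter.mpr ⟨hu, hur⟩)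
    have hK : ∀ z, a ≤ z → z < r₀ → 1 ≤ heightFn S' T z := by
      intro z h1 h2
      have hfe : S'.filter (fun s => s ≤ z) = S'.filter (fun s => s ≤ r₀) := by
        ext s
        simp only [Finset.mem_filter, and_congr_right_iff]
        intro hs
        constructor
        · intro hsz; linarith
        · intro hsr
          exact le_trans (hmaxa s hs hsr) h1
      have hTm : (T.filter (fun t => t ≤ z)).card ≤ (T.filter (fun t => t ≤ r₀)).card :=
        Finset.card_le_card (Finset.monotone_filter_right T (fun t _ ht => le_trans ht h2.le))
      unfold heightFn at hc ⊢
      rw [hfe]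
      omega
    apply swap_core S T N hN R'' hsub hScard r₀ hr₀ a haS'
    intro x
    rw [height_swap S T R'' r₀ a hsub hr₀ haS' x]
    rw [min_eq_left har'.le, max_eq_right har'.le]
    by_cases h1 : a ≤ x
    · by_cases h2 : r₀ ≤ x
      · rw [if_pos h1, if_pos h2]
        rw [Set.indicator_apply, if_neg (by simp [Set.mem_Ico]; intro; linarith)]
        push_cast; ring_nf
      · rw [if_pos h1, if_neg h2]
        have hKx := hK x h1 (not_le.mp h2)
        rw [Set.indicator_apply, if_pos (Set.mem_Ico.mpr ⟨h1, not_le.mp h2⟩)]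
        have h3 : (1:ℝ) ≤ (heightFn S' T x : ℝ) := by exact_mod_cast hKx
        rw [abs_of_nonneg (by push_cast; linarith), abs_of_nonneg (by linarith)]
        push_cast; ring
    · have h2 : ¬ r₀ ≤ x := fun hc2 => h1 (har.trans hc2)
      rw [if_neg h1, if_neg h2]
      rw [Set.indicator_apply, if_neg (by simp [Set.mem_Ico]; intro hcc; linarith)]
      push_cast; ring_nf


lemma card_filter_le_orderEmbOfFin (R : Finset ℝ) {m : ℕ} (h : R.card = m) (k : Fin m) :
    (R.filter (fun r => r ≤ R.orderEmbOfFin h k)).card = (k : ℕ) + 1 := by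
  rw [Finset.card_filter]
  rw [sum_image_orderEmbOfFin h (fun r => if r ≤ R.orderEmbOfFin h k then (1:ℕ) else 0)]
  have hcongr : ∀ j : Fin m,
      (if R.orderEmbOfFin h j ≤ R.orderEmbOfFin h k then (1:ℕ) else 0) =
        if j ≤ k then 1 else 0 := by
    intro j
    congr 1
    exact propext (R.orderEmbOfFin h).le_iff_le
  rw [Finset.sum_congr rfl (fun j _ => hcongr j), ← Finset.card_filter]
  have : Finset.univ.filter (fun j => j ≤ k) = Finset.Iic k := by ext j; simp
  rw [this, Fin.card_Iic]

lemma height_split (S T Rr : Finset ℝ) (hsub : Rr ⊆ S) (x : ℝ) :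
    heightFn S T x = heightFn (S \ Rr) T x + ((Rr.filter (fun r => r ≤ x)).card : ℤ) := by
  unfold heightFn
  have hd : Disjoint ((S \ Rr).filter (fun s => s ≤ x)) (Rr.filter (fun r => r ≤ x)) :=
    Finset.disjoint_filter_filter Finset.sdiff_disjoint
  have : (S.filter (fun s => s ≤ x)).card =
      ((S \ Rr).filter (fun s => s ≤ x)).card + (Rr.filter (fun r => r ≤ x)).card := by
    rw [← Finset.card_union_of_disjoint hd, ← Finset.filter_union,
      Finset.sdiff_union_of_subset hsub]
  omega

lemma heightCond_of_zero (S T R : Finset ℝ) (hsub : R ⊆ S) (hcard : R.card = S.card - T.card)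
    (hzero : ∀ r ∈ R, heightFn (S \ R) T r = 0) : HeightCond S T R := by
  refine ⟨hcard, fun k => ?_⟩
  rw [height_split S T R hsub _, hzero _ (Finset.orderEmbOfFin_mem R hcard k),
    card_filter_le_orderEmbOfFin R hcard k]
  push_cast
  ring

end ARAux

/-- if `R ⊆ S` with `|R| = |S| − |T|` satisfies the height condition and
minimizes `Σ_{r ∈ R'} |r − N(r)| + ∫ |H_{R'}(x)| dx` over all subsets `R' ⊆ S`
satisfying the height condition, then `A_R` is a minimum-cost assignment. -/
theorem AR_min_cost_of_height_and_min_quantity (S T : Finset ℝ)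
    (hdisj : Disjoint S T) (hST : T.card < S.card) (hT : 1 ≤ T.card)
    (N : ℝ → ℝ) (hN : IsNearestNeighbor S T N)
    (R : Finset ℝ) (hR : R ⊆ S) (hcard : R.card = S.card - T.card)
    (hheight : HeightCond S T R)
    (hmin : ∀ R' : Finset ℝ, R' ⊆ S → R'.card = S.card - T.card →
      HeightCond S T R' → removeCost S T R N ≤ removeCost S T R' N)
    (A : ℝ → ℝ) (hA : IsAR S T R N A) :
    IsAssignment S T A ∧
      ∀ A' : ℝ → ℝ, IsAssignment S T A' →
        ∑ s ∈ S, |s - A s| ≤ ∑ s ∈ S, |s - A' s| := by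
  classical
  obtain ⟨hA1, h9, hA2⟩ := hA
  have hNT : ∀ s ∈ S, N s ∈ T ∧ ∀ t ∈ T, |s - N s| ≤ |s - t| := hN
  constructor
  · constructor
    · intro s hs
      by_cases hsR : s ∈ R
      · rw [hA1 s hsR]; exact (hNT s hs).1
      · have hs' : s ∈ S \ R := Finset.mem_sdiff.mpr ⟨hs, hsR⟩
        obtain ⟨k, hk⟩ : ∃ k, (S \ R).orderEmbOfFin h9 k = s :=
          (Set.ext_iff.mp (Finset.range_orderEmbOfFin (S \ R) h9) s).mpr
            (Finset.mem_coe.mpr hs')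
        rw [← hk, hA2 k]
        exact Finset.orderEmbOfFin_mem T rfl k
    · intro t ht
      obtain ⟨k, hk⟩ : ∃ k, T.orderEmbOfFin rfl k = t :=
        (Set.ext_iff.mp (Finset.range_orderEmbOfFin T rfl) t).mpr (Finset.mem_coe.mpr ht)
      exact ⟨(S \ R).orderEmbOfFin h9 k,
        Finset.sdiff_subset (Finset.orderEmbOfFin_mem (S \ R) h9 k), by rw [hA2 k, hk]⟩
  · intro A' hA'
    -- cost of A equals removeCost R
    have hcostA : ∑ s ∈ S, |s - A s| = removeCost S T R N := by
      rw [removeCost, ← Finset.sum_sdiff hR]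
      have hRpart : ∑ r ∈ R, |r - A r| = ∑ r ∈ R, |r - N r| :=
        Finset.sum_congr rfl (fun r hr => by rw [hA1 r hr])
      have hSRpart : ∑ s ∈ S \ R, |s - A s| = ∫ x, |(heightFn (S \ R) T x : ℝ)| := by
        rw [ARAux.sum_image_orderEmbOfFin h9 (fun s => |s - A s|)]
        rw [ARAux.integral_abs_height_sorted (S \ R) T h9 rfl]
        exact Finset.sum_congr rfl (fun k _ => by rw [hA2 k])
      rw [hRpart, hSRpart]
      ring
    rw [hcostA]
    -- choose representatives for A'
    have hchoice : ∀ t, ∃ s, t ∈ T → s ∈ S ∧ A' s = t := by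
      intro t
      by_cases ht : t ∈ T
      · obtain ⟨s, hs, hst⟩ := hA'.2 t ht
        exact ⟨s, fun _ => ⟨hs, hst⟩⟩
      · exact ⟨0, fun h => absurd h ht⟩
    choose c hc using hchoice
    set M : Finset ℝ := T.image c with hM
    have hMsub : M ⊆ S := by
      intro s hs
      obtain ⟨t, ht, rfl⟩ := Finset.mem_image.mp hs
      exact (hc t ht).1
    have hcinj : ∀ t₁ ∈ T, ∀ t₂ ∈ T, c t₁ = c t₂ → t₁ = t₂ := by
      intro t₁ h₁ t₂ h₂ hcc
      rw [← (hc t₁ h₁).2, ← (hc t₂ h₂).2, hcc]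
    have hMcard : M.card = T.card := Finset.card_image_of_injOn (fun a ha b hb => hcinj a ha b hb)
    have himgA' : M.image A' = T := by
      rw [hM, Finset.image_image]
      have : T.image (A' ∘ c) = T.image id := Finset.image_congr (fun t ht => (hc t ht).2)
      rw [this, Finset.image_id]
    have hA'inj : ∀ x ∈ M, ∀ y ∈ M, A' x = A' y → x = y := by
      intro x hx y hy hxy
      obtain ⟨t₁, ht₁, rfl⟩ := Finset.mem_image.mp hx
      obtain ⟨t₂, ht₂, rfl⟩ := Finset.mem_image.mp hy
      rw [(hc t₁ ht₁).2, (hc t₂ ht₂).2] at hxy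
      rw [hxy]
    set R'' : Finset ℝ := S \ M with hR''
    have hR''sub : R'' ⊆ S := Finset.sdiff_subset
    have hR''card : R''.card = S.card - T.card := by
      rw [hR'', Finset.card_sdiff_of_subset hMsub, hMcard]
    have hSR'' : S \ R'' = M := Finset.sdiff_sdiff_eq_self hMsub
    -- cost of A' dominates removeCost R''
    have hcostA' : removeCost S T R'' N ≤ ∑ s ∈ S, |s - A' s| := by
      rw [removeCost, hSR'', ← Finset.sum_sdiff hMsub]
      have h1 : ∑ r ∈ R'', |r - N r| ≤ ∑ s ∈ S \ M, |s - A' s| := by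
        apply Finset.sum_le_sum
        intro s hs
        exact (hNT s (Finset.mem_sdiff.mp hs).1).2 (A' s)
          (hA'.1 s (Finset.mem_sdiff.mp hs).1)
      have h2 : ∫ x, |(heightFn M T x : ℝ)| ≤ ∑ s ∈ M, |s - A' s| :=
        ARAux.integral_abs_height_le M T A' himgA' hA'inj
      linarith
    -- find a minimizer with the height condition
    set D : Finset (Finset ℝ) := S.powerset.filter
      (fun X => X.card = S.card - T.card ∧ removeCost S T X N ≤ removeCost S T R'' N) with hD
    have hR''D : R'' ∈ D := by
      rw [hD, Finset.mem_filter, Finset.mem_powerset]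
      exact ⟨hR''sub, hR''card, le_refl _⟩
    obtain ⟨Rs, hRsD, hRsmin⟩ := Finset.exists_min_image D
      (fun X => removeCost S T X N + ∫ x, |(heightFn (S \ X) T x : ℝ)|) ⟨R'', hR''D⟩
    rw [hD, Finset.mem_filter, Finset.mem_powerset] at hRsD
    obtain ⟨hRssub, hRscard, hRsle⟩ := hRsD
    have hSRscard : (S \ Rs).card = T.card := by
      rw [Finset.card_sdiff_of_subset hRssub, hRscard]
      omega
    have hzero : ∀ r ∈ Rs, heightFn (S \ Rs) T r = 0 := by
      by_contra hcon
      push_neg at hcon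
      obtain ⟨r₀, hr₀, hne0⟩ := hcon
      obtain ⟨Rn, hn1, hn2, hn3, hn4⟩ :=
        ARAux.swap S T N hNT Rs hRssub hSRscard r₀ hr₀ hne0
      have hRnD : Rn ∈ D := by
        rw [hD, Finset.mem_filter, Finset.mem_powerset]
        refine ⟨hn1, hn2.trans hRscard, ?_⟩
        have : removeCost S T Rn N ≤ removeCost S T Rs N := by
          rw [removeCost, removeCost]; exact hn3
        linarith
      have := hRsmin Rn hRnD
      rw [removeCost, removeCost] at this
      linarith [hn3, hn4]
    have hHC : HeightCond S T Rs := ARAux.heightCond_of_zero S T Rs hRssub hRscard hzero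
    calc removeCost S T R N ≤ removeCost S T Rs N := hmin Rs hRssub hRscard hHC
      _ ≤ removeCost S T R'' N := hRsle
      _ ≤ ∑ s ∈ S, |s - A' s| := hcostA'
end

section
/- Let S and T be finite sets of real numbers with S ∩ T = ∅ and |S| > |T| ≥ 1, and let m = max(S ∪ T). For every subset R ⊆ S with |R| = |S| − |T| whose k-th smallest element has height k for every k with 1 ≤ k ≤ |S| − |T|, the following identity holds: ∫_{−∞}^{+∞} |H_R(x)| dx = ∫_{−∞}^{m} |H(x)| dx − Σ_{r ∈ R} ∫_{r}^{m} h^{H(r)}(x) dx. -/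
open Finset MeasureTheory

/-- The relative height `h^k(x)`: `1` if `H(x) ≥ k` and `−1` otherwise. -/
noncomputable def relHeight (S T : Finset ℝ) (k : ℤ) (x : ℝ) : ℝ :=
  if k ≤ heightFn S T x then 1 else -1

lemma key_sum_int (H : ℤ) (c : ℕ) :
    ∑ k ∈ Finset.range c, (if (k:ℤ)+1 ≤ H then (1:ℤ) else -1) = |H| - |H - c| := by
  induction c with
  | zero => simp
  | succ n ih =>
      rw [Finset.sum_range_succ, ih]
      rcases le_or_gt ((n:ℤ)+1) H with h | h <;>
        simp only [h, if_pos, if_neg, not_le] <;>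
      · rcases abs_cases (H - (n:ℤ)) with ⟨e1,_⟩|⟨e1,_⟩ <;>
          rcases abs_cases (H - ((n:ℕ)+1:ℕ)) with ⟨e2,_⟩|⟨e2,_⟩ <;>
          rcases abs_cases H with ⟨e3,_⟩|⟨e3,_⟩ <;> push_cast at * <;> omega

lemma key_sum (H : ℤ) (c : ℕ) :
    ∑ k ∈ Finset.range c, (if (k:ℤ)+1 ≤ H then (1:ℝ) else -1) = |(H:ℝ)| - |(H:ℝ) - c| := by
  have h := key_sum_int H c
  calc ∑ k ∈ Finset.range c, (if (k:ℤ)+1 ≤ H then (1:ℝ) else -1)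
      = ((∑ k ∈ Finset.range c, (if (k:ℤ)+1 ≤ H then (1:ℤ) else -1) : ℤ) : ℝ) := by
        rw [Int.cast_sum]; apply Finset.sum_congr rfl; intro k _; split <;> simp
    _ = _ := by rw [h]; push_cast; ring

lemma emb_le_iff (R : Finset ℝ) {d : ℕ} (h : R.card = d) (x : ℝ) (k : Fin d) :
    R.orderEmbOfFin h k ≤ x ↔ (k : ℕ) < (R.filter (fun r => r ≤ x)).card := by
  constructor
  · intro hle
    have hsub : (Finset.Iic k).image (R.orderEmbOfFin h) ⊆ R.filter (fun r => r ≤ x) := by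
      intro r hr
      simp only [Finset.mem_image, Finset.mem_Iic] at hr
      obtain ⟨j, hj, rfl⟩ := hr
      exact Finset.mem_filter.2 ⟨Finset.orderEmbOfFin_mem _ _ _,
        le_trans ((R.orderEmbOfFin h).monotone hj) hle⟩
    have := Finset.card_le_card hsub
    rw [Finset.card_image_of_injective _ (R.orderEmbOfFin h).injective, Fin.card_Iic] at this
    omega
  · intro hlt
    by_contra hle
    push_neg at hle
    have hsub : R.filter (fun r => r ≤ x) ⊆ (Finset.Iio k).image (R.orderEmbOfFin h) := by
      intro r hr
      rw [Finset.mem_filter] at hr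
      have hmem : r ∈ Set.range (R.orderEmbOfFin h) := by
        rw [Finset.range_orderEmbOfFin]; exact hr.1
      obtain ⟨j, rfl⟩ := hmem
      refine Finset.mem_image.2 ⟨j, Finset.mem_Iio.2 ?_, rfl⟩
      by_contra hjk
      push_neg at hjk
      exact absurd (le_trans ((R.orderEmbOfFin h).monotone hjk) hr.2) (not_le.2 hle)
    have := Finset.card_le_card hsub
    rw [Finset.card_image_of_injective _ (R.orderEmbOfFin h).injective, Fin.card_Iio] at this
    omega

lemma pointwise_id (S T R : Finset ℝ) (hR : R ⊆ S) (hheight : HeightCond S T R) (x : ℝ) :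
    |(heightFn (S \ R) T x : ℝ)| = |(heightFn S T x : ℝ)| -
      ∑ r ∈ R, (if r ≤ x then relHeight S T (heightFn S T r) x else 0) := by
  obtain ⟨h, hk⟩ := hheight
  set d := S.card - T.card with hd
  set c := (R.filter (fun r => r ≤ x)).card with hc
  have hcd : c ≤ d := h ▸ Finset.card_le_card (Finset.filter_subset _ _)
  have hfil : (S \ R).filter (fun s => s ≤ x)
      = S.filter (fun s => s ≤ x) \ R.filter (fun r => r ≤ x) := by
    ext a; simp only [Finset.mem_filter, Finset.mem_sdiff]; tauto
  have hsubf : R.filter (fun r => r ≤ x) ⊆ S.filter (fun s => s ≤ x) :=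
    Finset.filter_subset_filter _ hR
  have hle := Finset.card_le_card hsubf
  have hHR : heightFn (S \ R) T x = heightFn S T x - c := by
    unfold heightFn
    rw [hfil, Finset.card_sdiff_of_subset hsubf]
    push_cast [Nat.cast_sub hle]
    ring
  have himg : Finset.univ.image (R.orderEmbOfFin h) = R := by
    apply Finset.coe_injective
    rw [Finset.coe_image, Finset.coe_univ, Set.image_univ, Finset.range_orderEmbOfFin]
  have hsum : ∑ r ∈ R, (if r ≤ x then relHeight S T (heightFn S T r) x else 0)
      = ∑ k ∈ Finset.range d,
          (if k < c then (if (k:ℤ)+1 ≤ heightFn S T x then (1:ℝ) else -1) else 0) := by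
    rw [← himg, Finset.sum_image (fun a _ b _ e => (R.orderEmbOfFin h).injective e),
      ← Fin.sum_univ_eq_sum_range
        (fun k => if k < c then (if (k:ℤ)+1 ≤ heightFn S T x then (1:ℝ) else -1) else 0) d]
    apply Finset.sum_congr rfl
    intro k _
    rw [hk k]
    unfold relHeight
    exact if_congr (emb_le_iff R h x k) rfl rfl
  rw [hsum]
  have : ∑ k ∈ Finset.range d,
      (if k < c then (if (k:ℤ)+1 ≤ heightFn S T x then (1:ℝ) else -1) else 0)
      = ∑ k ∈ Finset.range c, (if (k:ℤ)+1 ≤ heightFn S T x then (1:ℝ) else -1) := by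
    rw [← Finset.sum_filter]
    apply Finset.sum_congr _ (fun _ _ => rfl)
    ext j
    simp only [Finset.mem_filter, Finset.mem_range]
    omega
  rw [this, key_sum, hHR]
  push_cast
  ring

lemma integrableOn_ind (a m : ℝ) :
    IntegrableOn (fun x => if a ≤ x then (1:ℝ) else 0) (Set.Iic m) := by
  have h : (fun x => if a ≤ x then (1:ℝ) else 0) = (Set.Ici a).indicator (fun _ => 1) := by
    ext x; simp [Set.indicator_apply]
  rw [h, IntegrableOn, integrable_indicator_iff measurableSet_Ici, IntegrableOn,
    Measure.restrict_restrict measurableSet_Ici, Set.Ici_inter_Iic]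
  exact integrableOn_const measure_Icc_lt_top.ne

lemma integrableOn_count (A : Finset ℝ) (m : ℝ) :
    IntegrableOn (fun x => ((A.filter (fun a => a ≤ x)).card : ℝ)) (Set.Iic m) := by
  have h : (fun x => ((A.filter (fun a => a ≤ x)).card : ℝ))
      = fun x => ∑ a ∈ A, if a ≤ x then (1:ℝ) else 0 := by
    ext x; rw [Finset.sum_boole]
  rw [h]
  exact integrable_finset_sum _ (fun a _ => integrableOn_ind a m)

lemma integrableOn_heightAbs (S T : Finset ℝ) (m : ℝ) :
    IntegrableOn (fun x => |(heightFn S T x : ℝ)|) (Set.Iic m) := by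
  apply Integrable.abs
  have h : (fun x => (heightFn S T x : ℝ)) = fun x =>
      ((S.filter (fun a => a ≤ x)).card : ℝ) - ((T.filter (fun a => a ≤ x)).card : ℝ) := by
    ext x; unfold heightFn; push_cast; ring
  exact ((integrableOn_count S m).sub (integrableOn_count T m)).congr
    (Filter.Eventually.of_forall fun x => by simp only [Pi.sub_apply]; unfold heightFn; push_cast; ring)

lemma measurable_count (A : Finset ℝ) :
    Measurable (fun x => ((A.filter (fun a => a ≤ x)).card : ℝ)) := by
  apply Monotone.measurable
  intro x y hxy
  have h : A.filter (fun a => a ≤ x) ⊆ A.filter (fun a => a ≤ y) := by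
    intro a ha; rw [Finset.mem_filter] at *; exact ⟨ha.1, le_trans ha.2 hxy⟩
  simp only []
  exact_mod_cast Finset.card_le_card h

lemma measurable_relHeight (S T : Finset ℝ) (k : ℤ) : Measurable (relHeight S T k) := by
  have hf : Measurable (fun x => (heightFn S T x : ℝ)) := by
    have h : (fun x => (heightFn S T x : ℝ)) = fun x =>
        ((S.filter (fun a => a ≤ x)).card : ℝ) - ((T.filter (fun a => a ≤ x)).card : ℝ) := by
      ext x; unfold heightFn; push_cast; ring
    rw [h]; exact (measurable_count S).sub (measurable_count T)
  have hset : MeasurableSet {x : ℝ | k ≤ heightFn S T x} := by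
    have : {x : ℝ | k ≤ heightFn S T x} = {x : ℝ | (k:ℝ) ≤ (heightFn S T x : ℝ)} := by
      ext x; simp
    rw [this]
    exact measurableSet_le measurable_const hf
  unfold relHeight
  exact Measurable.ite hset measurable_const measurable_const

lemma integrableOn_term (S T : Finset ℝ) (k : ℤ) (r m : ℝ) :
    IntegrableOn (fun x => if r ≤ x then relHeight S T k x else 0) (Set.Iic m) := by
  have h : (fun x => if r ≤ x then relHeight S T k x else 0)
      = (Set.Ici r).indicator (relHeight S T k) := by
    ext x; simp [Set.indicator_apply]
  rw [h, IntegrableOn, integrable_indicator_iff measurableSet_Ici, IntegrableOn,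
    Measure.restrict_restrict measurableSet_Ici, Set.Ici_inter_Iic]
  apply Measure.integrableOn_of_bounded measure_Icc_lt_top.ne
    (measurable_relHeight S T k).aestronglyMeasurable (M := 1)
  filter_upwards with x
  unfold relHeight; split <;> simp

/-- Karp–Li identity: for `R ⊆ S` with `|R| = |S| − |T|` whose `k`-th
smallest element has height `k`, and `m = max (S ∪ T)`,
`∫ |H_R| = ∫_{−∞}^m |H| − Σ_{r ∈ R} ∫_r^m h^{H(r)}`. -/
theorem karp_li_identity (S T : Finset ℝ)
    (hdisj : Disjoint S T) (hST : T.card < S.card) (hT : 1 ≤ T.card)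
    (hne : (S ∪ T).Nonempty)
    (R : Finset ℝ) (hR : R ⊆ S) (hcard : R.card = S.card - T.card)
    (hheight : HeightCond S T R) :
    ∫ x : ℝ, |(heightFn (S \ R) T x : ℝ)| =
      (∫ x in Set.Iic ((S ∪ T).max' hne), |(heightFn S T x : ℝ)|) -
        ∑ r ∈ R, ∫ x in r..((S ∪ T).max' hne), relHeight S T (heightFn S T r) x := by
  set m := (S ∪ T).max' hne with hm
  have hmax : ∀ a ∈ S ∪ T, a ≤ m := fun a ha => Finset.le_max' _ a ha
  -- Step 1: restrict integral to Iic m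
  have h1 : ∫ x in Set.Iic m, |(heightFn (S \ R) T x : ℝ)|
      = ∫ x : ℝ, |(heightFn (S \ R) T x : ℝ)| := by
    apply setIntegral_eq_integral_of_forall_compl_eq_zero
    intro x hx
    rw [Set.mem_Iic, not_le] at hx
    have hz : heightFn (S \ R) T x = 0 := by
      unfold heightFn
      rw [Finset.filter_true_of_mem (fun a ha => le_of_lt (lt_of_le_of_lt
            (hmax a (Finset.mem_union_left _ ((Finset.sdiff_subset) ha))) hx)),
          Finset.filter_true_of_mem (fun a ha => le_of_lt (lt_of_le_of_lt
            (hmax a (Finset.mem_union_right _ ha)) hx)),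
          Finset.card_sdiff_of_subset hR, hcard]
      have hTS : T.card ≤ S.card := le_of_lt hST
      have : S.card - (S.card - T.card) = T.card := by omega
      rw [this]; ring
    rw [hz]; simp
  rw [← h1]
  -- Step 2: pointwise identity and linearity
  have hint2 : ∀ r ∈ R, IntegrableOn
      (fun x => if r ≤ x then relHeight S T (heightFn S T r) x else 0) (Set.Iic m) :=
    fun r _ => integrableOn_term S T _ r m
  have h2 : ∫ x in Set.Iic m, |(heightFn (S \ R) T x : ℝ)|
      = (∫ x in Set.Iic m, |(heightFn S T x : ℝ)|)
        - ∫ x in Set.Iic m, ∑ r ∈ R, (if r ≤ x then relHeight S T (heightFn S T r) x else 0) := by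
    rw [← integral_sub (integrableOn_heightAbs S T m) (integrable_finset_sum _ hint2)]
    exact integral_congr_ae (Filter.Eventually.of_forall fun x =>
      pointwise_id S T R hR hheight x)
  rw [h2, integral_finset_sum _ hint2]
  congr 1
  apply Finset.sum_congr rfl
  intro r hr
  have hrm : r ≤ m := hmax r (Finset.mem_union_left _ (hR hr))
  have hind : (fun x => if r ≤ x then relHeight S T (heightFn S T r) x else 0)
      = (Set.Ici r).indicator (relHeight S T (heightFn S T r)) := by
    ext x; simp [Set.indicator_apply]
  rw [hind, setIntegral_indicator measurableSet_Ici, Set.inter_comm, Set.Ici_inter_Iic,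
    integral_Icc_eq_integral_Ioc, intervalIntegral.integral_of_le hrm]
end

section
/- Let S and T be finite sets of real numbers with S ∩ T = ∅ and |S| > |T| ≥ 1, and let K = |S| − |T|. For each k with 1 ≤ k ≤ K, let r_k be the smallest element of {s ∈ S : H(s) = k} that maximizes the profit P over this set, and let R = {r_1, …, r_K}. Then the assignment A_R has minimum cost: cost(A_R) ≤ cost(A) for every assignment A : S → T. -/
open Finset MeasureTheory

/-- The profit `P(s) = ∫_s^m h^{H(s)}(x) dx − |s − N(s)|`, where `m` is the largest
point of `S ∪ T`. -/
noncomputable def profit (S T : Finset ℝ) (N : ℝ → ℝ) (m s : ℝ) : ℝ :=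
  (∫ x in s..m, relHeight S T (heightFn S T s) x) - |s - N s|

lemma aux_intervalIntegrable {f : ℝ → ℝ} (hf : Measurable f) {C : ℝ}
    (hC : ∀ x, |f x| ≤ C) (a b : ℝ) : IntervalIntegrable f volume a b := by
  rw [intervalIntegrable_iff]
  refine Measure.integrableOn_of_bounded (M := C) ?_ hf.aestronglyMeasurable ?_
  · rw [Set.uIoc]; exact measure_Ioc_lt_top.ne
  · exact Filter.Eventually.of_forall fun x => (by simpa using hC x)

lemma measurable_heightFn (S T : Finset ℝ) : Measurable (heightFn S T) := by
  have h1 : ∀ F : Finset ℝ, Measurable (fun x => ((F.filter (fun s => s ≤ x)).card : ℤ)) := by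
    intro F
    have h2 : (fun x => ((F.filter (fun s => s ≤ x)).card : ℤ))
        = fun x => ∑ s ∈ F, (if s ≤ x then (1:ℤ) else 0) := by
      funext x
      rw [Finset.card_filter]
      push_cast
      rfl
    rw [h2]
    refine Finset.measurable_sum _ fun s _ => ?_
    exact Measurable.ite (measurableSet_Ici (a := s)) measurable_const measurable_const
  exact (h1 S).sub (h1 T)

lemma abs_relHeight_le (S T : Finset ℝ) (k : ℤ) (x : ℝ) : |relHeight S T k x| ≤ 1 := by
  unfold relHeight; split <;> simp

lemma relHeight_intervalIntegrable (S T : Finset ℝ) (k : ℤ) (a b : ℝ) :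
    IntervalIntegrable (relHeight S T k) volume a b :=
  aux_intervalIntegrable (measurable_relHeight S T k) (abs_relHeight_le S T k) a b

lemma integral_const_on {f : ℝ → ℝ} {a b c : ℝ} (hab : a ≤ b)
    (h : ∀ y, a ≤ y → y < b → f y = c) :
    ∫ x in a..b, f x = (b - a) * c := by
  have hb : ∀ᵐ (y:ℝ) ∂volume, y ≠ b := by
    rw [MeasureTheory.ae_iff]
    simpa using measure_singleton b
  have h3 : ∫ x in a..b, f x = ∫ x in a..b, c := by
    refine intervalIntegral.integral_congr_ae ?_
    filter_upwards [hb] with y hy hmem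
    rw [Set.uIoc_of_le hab] at hmem
    exact h y hmem.1.le (lt_of_le_of_ne hmem.2 hy)
  rw [h3, intervalIntegral.integral_const, smul_eq_mul]

lemma abs_sub_nat_eq (n : ℤ) (j : ℕ) :
    |(n:ℝ) - j| = |(n:ℝ)| - ∑ i ∈ Finset.range j, (if ((i:ℤ)+1 ≤ n) then (1:ℝ) else -1) := by
  induction j with
  | zero => simp
  | succ j ih =>
    rw [Finset.sum_range_succ]
    rcases le_or_gt ((j:ℤ)+1) n with h | h
    · have hc : ((j:ℝ)+1) ≤ (n:ℝ) := by exact_mod_cast h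
      rw [if_pos h, abs_of_nonneg (show (0:ℝ) ≤ (n:ℝ) - ((j+1:ℕ):ℝ) by push_cast; linarith)]
      have h2 : |(n:ℝ) - j| = (n:ℝ) - j := abs_of_nonneg (by linarith)
      push_cast
      push_cast at ih h2
      linarith [ih, h2]
    · have hn : n ≤ (j:ℤ) := by omega
      have hc : (n:ℝ) ≤ (j:ℝ) := by exact_mod_cast hn
      rw [if_neg (not_le.mpr h), abs_of_nonpos (show (n:ℝ) - ((j+1:ℕ):ℝ) ≤ 0 by push_cast; linarith)]
      have h2 : |(n:ℝ) - j| = -((n:ℝ) - j) := abs_of_nonpos (by linarith)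
      push_cast
      push_cast at ih h2
      linarith [ih, h2]

section ind
-- integral of |indicator p - indicator q| over [α, m]

private lemma ind_meas (p q : ℝ) :
    Measurable (fun x => |(if p ≤ x then (1:ℝ) else 0) - (if q ≤ x then 1 else 0)|) := by
  refine Measurable.abs (Measurable.sub ?_ ?_) <;>
    exact Measurable.ite (measurableSet_Ici) measurable_const measurable_const

private lemma ind_bdd (p q : ℝ) (x : ℝ) :
    |(|(if p ≤ x then (1:ℝ) else 0) - (if q ≤ x then 1 else 0)|)| ≤ 1 := by
  split_ifs <;> norm_num

private lemma ind_ii (p q a b : ℝ) :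
    IntervalIntegrable (fun x => |(if p ≤ x then (1:ℝ) else 0) - (if q ≤ x then 1 else 0)|)
      volume a b :=
  aux_intervalIntegrable (ind_meas p q) (ind_bdd p q) a b

private lemma integral_abs_ind_core {α m p q : ℝ} (hαp : α ≤ p) (hpq : p ≤ q) (hqm : q ≤ m) :
    ∫ x in α..m, |(if p ≤ x then (1:ℝ) else 0) - (if q ≤ x then 1 else 0)| = q - p := by
  have hF : ∀ x, |(if p ≤ x then (1:ℝ) else 0) - (if q ≤ x then 1 else 0)|
      = |(if p ≤ x then (1:ℝ) else 0) - (if q ≤ x then 1 else 0)| := fun _ => rfl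
  have s1 : ∫ x in α..p, |(if p ≤ x then (1:ℝ) else 0) - (if q ≤ x then 1 else 0)| = 0 := by
    rw [integral_const_on hαp (c := 0)]
    · ring
    · intro y _ hy
      have h1 : ¬ p ≤ y := not_le.mpr hy
      have h2 : ¬ q ≤ y := not_le.mpr (lt_of_lt_of_le hy hpq)
      simp [h1, h2]
  have s2 : ∫ x in p..q, |(if p ≤ x then (1:ℝ) else 0) - (if q ≤ x then 1 else 0)| = q - p := by
    rw [integral_const_on hpq (c := 1)]
    · ring
    · intro y hy1 hy2
      have h2 : ¬ q ≤ y := not_le.mpr hy2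
      simp [hy1, h2]
  have s3 : ∫ x in q..m, |(if p ≤ x then (1:ℝ) else 0) - (if q ≤ x then 1 else 0)| = 0 := by
    rw [integral_const_on hqm (c := 0)]
    · ring
    · intro y hy1 _
      have h1 : p ≤ y := le_trans hpq hy1
      simp [h1, hy1]
  have hsplit1 : ∫ x in α..q, |(if p ≤ x then (1:ℝ) else 0) - (if q ≤ x then 1 else 0)| = (∫ x in α..p, |(if p ≤ x then (1:ℝ) else 0) - (if q ≤ x then 1 else 0)|) + ∫ x in p..q, |(if p ≤ x then (1:ℝ) else 0) - (if q ≤ x then 1 else 0)| :=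
    (intervalIntegral.integral_add_adjacent_intervals (ind_ii p q α p) (ind_ii p q p q)).symm
  have hsplit2 : ∫ x in α..m, |(if p ≤ x then (1:ℝ) else 0) - (if q ≤ x then 1 else 0)| = (∫ x in α..q, |(if p ≤ x then (1:ℝ) else 0) - (if q ≤ x then 1 else 0)|) + ∫ x in q..m, |(if p ≤ x then (1:ℝ) else 0) - (if q ≤ x then 1 else 0)| :=
    (intervalIntegral.integral_add_adjacent_intervals (ind_ii p q α q) (ind_ii p q q m)).symm
  rw [hsplit2, hsplit1, s1, s2, s3]; ring

lemma integral_abs_ind {α m p q : ℝ} (hαp : α ≤ p) (hpm : p ≤ m) (hαq : α ≤ q) (hqm : q ≤ m) :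
    ∫ x in α..m, |(if p ≤ x then (1:ℝ) else 0) - (if q ≤ x then 1 else 0)| = |p - q| := by
  rcases le_total p q with h | h
  · rw [integral_abs_ind_core hαp h hqm, abs_of_nonpos (by linarith)]; ring
  · have hcomm : ∀ x, |(if p ≤ x then (1:ℝ) else 0) - (if q ≤ x then 1 else 0)|
        = |(if q ≤ x then (1:ℝ) else 0) - (if p ≤ x then 1 else 0)| := fun x => abs_sub_comm _ _
    simp_rw [hcomm]
    rw [integral_abs_ind_core hαq h hpm, abs_of_nonneg (by linarith)]

end ind

lemma heightFn_congr (S T : Finset ℝ) {x y : ℝ} (hxy : x ≤ y)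
    (h : ∀ p ∈ S ∪ T, p ≤ y → p ≤ x) : heightFn S T y = heightFn S T x := by
  unfold heightFn
  have hS : S.filter (fun s => s ≤ y) = S.filter (fun s => s ≤ x) := by
    apply Finset.filter_congr
    intro p hp
    exact ⟨fun hpy => h p (Finset.mem_union_left _ hp) hpy, fun hpx => le_trans hpx hxy⟩
  have hT : T.filter (fun t => t ≤ y) = T.filter (fun t => t ≤ x) := by
    apply Finset.filter_congr
    intro p hp
    exact ⟨fun hpy => h p (Finset.mem_union_right _ hp) hpy, fun hpx => le_trans hpx hxy⟩
  rw [hS, hT]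

lemma heightFn_top (S T : Finset ℝ) {x : ℝ} (h : ∀ p ∈ S ∪ T, p ≤ x) :
    heightFn S T x = (S.card : ℤ) - T.card := by
  unfold heightFn
  rw [Finset.filter_true_of_mem (fun p hp => h p (Finset.mem_union_left _ hp)),
    Finset.filter_true_of_mem (fun p hp => h p (Finset.mem_union_right _ hp))]

lemma heightFn_jump (S T : Finset ℝ) {y z : ℝ} (hyz : y < z)
    (hgap : ∀ p ∈ S ∪ T, ¬(y < p ∧ p < z)) :
    heightFn S T z = heightFn S T y + (if z ∈ S then 1 else 0) - (if z ∈ T then 1 else 0) := by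
  have key : ∀ F : Finset ℝ, F ⊆ S ∪ T →
      ((F.filter (fun s => s ≤ z)).card : ℤ)
        = (F.filter (fun s => s ≤ y)).card + (if z ∈ F then 1 else 0) := by
    intro F hFsub
    have h1 : F.filter (fun s => s ≤ z) = F.filter (fun s => s ≤ y ∨ s = z) := by
      apply Finset.filter_congr
      intro p hp
      constructor
      · intro hpz
        rcases eq_or_lt_of_le hpz with h' | h'
        · right; exact h'
        · left
          by_contra hpy
          exact hgap p (hFsub hp) ⟨not_le.mp hpy, h'⟩
      · rintro (h' | rfl)
        · exact le_trans h' hyz.le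
        · exact le_refl _
    have h2 : F.filter (fun s => s ≤ y ∨ s = z)
        = F.filter (fun s => s ≤ y) ∪ F.filter (fun s => s = z) := Finset.filter_or _ _ _
    have h3 : F.filter (fun s => s = z) = if z ∈ F then {z} else ∅ := Finset.filter_eq' F z
    have hdisj2 : Disjoint (F.filter (fun s => s ≤ y)) (F.filter (fun s => s = z)) := by
      rw [Finset.disjoint_left]
      intro a ha1 ha2
      have h4 := (Finset.mem_filter.mp ha1).2
      have h5 := (Finset.mem_filter.mp ha2).2
      subst h5
      exact absurd h4 (not_le.mpr hyz)
    rw [h1, h2, Finset.card_union_of_disjoint hdisj2, h3]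
    split_ifs <;> simp
  unfold heightFn
  rw [key S Finset.subset_union_left, key T Finset.subset_union_right]
  push_cast
  ring
lemma exists_upcross (S T : Finset ℝ) (hdisj : Disjoint S T) (hne : (S ∪ T).Nonempty)
    {i : ℤ} (hiK : i ≤ (S.card : ℤ) - T.card) {x : ℝ} (hx : heightFn S T x < i) :
    ∃ s' ∈ S, x < s' ∧ heightFn S T s' = i ∧ ∀ y, x ≤ y → y < s' → heightFn S T y < i := by
  have hmle : ∀ p ∈ S ∪ T, p ≤ (S ∪ T).max' hne := fun p hp => Finset.le_max' _ p hp
  have hxm : x < (S ∪ T).max' hne := by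
    by_contra hc
    push_neg at hc
    have : heightFn S T x = (S.card : ℤ) - T.card :=
      heightFn_top S T (fun p hp => le_trans (hmle p hp) hc)
    omega
  have hmW : (S ∪ T).max' hne ∈ (S ∪ T).filter (fun z => x < z ∧ i ≤ heightFn S T z) := by
    rw [Finset.mem_filter]
    refine ⟨(S ∪ T).max'_mem hne, hxm, ?_⟩
    rw [heightFn_top S T hmle]
    exact hiK
  have hWne : ((S ∪ T).filter (fun z => x < z ∧ i ≤ heightFn S T z)).Nonempty := ⟨_, hmW⟩
  have hmin := Finset.min'_mem _ hWne
  obtain ⟨hs'u, hxs', his'⟩ := Finset.mem_filter.mp hmin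
  set s' := ((S ∪ T).filter (fun z => x < z ∧ i ≤ heightFn S T z)).min' hWne with hs'
  have claimA : ∀ y, x ≤ y → y < s' → heightFn S T y < i := by
    intro y hxy hys'
    by_contra hge
    push_neg at hge
    rcases ((S ∪ T).filter (fun p => x < p ∧ p ≤ y)).eq_empty_or_nonempty with hV | hV
    · have : heightFn S T y = heightFn S T x := by
        refine heightFn_congr S T hxy (fun p hp hpy => ?_)
        by_contra hpx
        push_neg at hpx
        have : p ∈ (S ∪ T).filter (fun p => x < p ∧ p ≤ y) :=
          Finset.mem_filter.mpr ⟨hp, hpx, hpy⟩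
        simp [hV] at this
      omega
    · have hzmem := Finset.mem_filter.mp (Finset.max'_mem _ hV)
      set z := ((S ∪ T).filter (fun p => x < p ∧ p ≤ y)).max' hV with hz
      obtain ⟨hzu, hxz, hzy⟩ := hzmem
      have hHz : heightFn S T y = heightFn S T z := by
        refine heightFn_congr S T hzy (fun p hp hpy => ?_)
        by_contra hpz
        push_neg at hpz
        have : p ∈ (S ∪ T).filter (fun p => x < p ∧ p ≤ y) :=
          Finset.mem_filter.mpr ⟨hp, lt_trans hxz hpz, hpy⟩
        exact absurd (Finset.le_max' _ p this) (not_le.mpr hpz)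
      have h1 : s' ≤ z := Finset.min'_le _ z (Finset.mem_filter.mpr ⟨hzu, hxz, by omega⟩)
      have h2 : z < s' := lt_of_le_of_lt hzy hys'
      linarith
  have hgap : ∃ y0, x ≤ y0 ∧ y0 < s' ∧ ∀ p ∈ S ∪ T, ¬(y0 < p ∧ p < s') := by
    rcases ((S ∪ T).filter (fun p => x < p ∧ p < s')).eq_empty_or_nonempty with hV | hV
    · refine ⟨x, le_refl x, hxs', fun p hp hc => ?_⟩
      have : p ∈ (S ∪ T).filter (fun p => x < p ∧ p < s') :=
        Finset.mem_filter.mpr ⟨hp, hc.1, hc.2⟩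
      simp [hV] at this
    · have hy0mem := Finset.mem_filter.mp (Finset.max'_mem _ hV)
      set y0 := ((S ∪ T).filter (fun p => x < p ∧ p < s')).max' hV with hy0
      refine ⟨y0, hy0mem.2.1.le, hy0mem.2.2, fun p hp hc => ?_⟩
      have : p ∈ (S ∪ T).filter (fun p => x < p ∧ p < s') :=
        Finset.mem_filter.mpr ⟨hp, lt_trans hy0mem.2.1 hc.1, hc.2⟩
      exact absurd (Finset.le_max' _ p this) (not_le.mpr hc.1)
  obtain ⟨y0, hy0x, hy0s, hgap⟩ := hgap
  have hjump := heightFn_jump S T hy0s hgap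
  have hy0lt : heightFn S T y0 < i := claimA y0 hy0x hy0s
  have hs'S : s' ∈ S := by
    rcases Finset.mem_union.mp hs'u with h | h
    · exact h
    · exfalso
      have hns : s' ∉ S := fun hc => (Finset.disjoint_left.mp hdisj hc) h
      rw [if_neg hns, if_pos h] at hjump
      omega
  have hnt : s' ∉ T := fun hc => (Finset.disjoint_left.mp hdisj hs'S) hc
  rw [if_pos hs'S, if_neg hnt] at hjump
  exact ⟨s', hs'S, hxs', by omega, claimA⟩
lemma exists_downcross (S T : Finset ℝ) (hdisj : Disjoint S T)
    {i : ℤ} (hi1 : 1 ≤ i) {x : ℝ} (hx : i ≤ heightFn S T x) :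
    ∃ s' ∈ S, s' ≤ x ∧ heightFn S T s' = i ∧ ∀ y, s' ≤ y → y ≤ x → i ≤ heightFn S T y := by
  classical
  -- predecessor height
  set pH : ℝ → ℤ := fun z =>
    heightFn S T z - (if z ∈ S then 1 else 0) + (if z ∈ T then 1 else 0) with hpH
  -- the set of points ≤ x is nonempty
  have hSx : ∃ s ∈ S, s ≤ x := by
    by_contra hc
    push_neg at hc
    have h1 : S.filter (fun s => s ≤ x) = ∅ := by
      rw [Finset.filter_eq_empty_iff]
      exact fun a ha h => absurd (hc a ha) (not_lt.mpr h)
    unfold heightFn at hx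
    rw [h1] at hx
    simp at hx
    have : (0:ℤ) ≤ ((T.filter (fun t => t ≤ x)).card : ℤ) := by positivity
    omega
  obtain ⟨s0, hs0S, hs0x⟩ := hSx
  have hUne : ((S ∪ T).filter (fun p => p ≤ x)).Nonempty :=
    ⟨s0, Finset.mem_filter.mpr ⟨Finset.mem_union_left _ hs0S, hs0x⟩⟩
  have hz0mem := Finset.mem_filter.mp (Finset.min'_mem _ hUne)
  set z0 := ((S ∪ T).filter (fun p => p ≤ x)).min' hUne with hz0
  have hz0min : ∀ p ∈ S ∪ T, p ≤ x → z0 ≤ p := by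
    intro p hp hpx
    exact Finset.min'_le ((S ∪ T).filter (fun q => q ≤ x)) p (Finset.mem_filter.mpr ⟨hp, hpx⟩)
  have hpHz0 : pH z0 = 0 := by
    have key : ∀ F : Finset ℝ, F ⊆ S ∪ T →
        ((F.filter (fun s => s ≤ z0)).card : ℤ) = (if z0 ∈ F then 1 else 0) := by
      intro F hF
      have h1 : F.filter (fun s => s ≤ z0) = F.filter (fun s => s = z0) := by
        apply Finset.filter_congr
        intro p hp
        constructor
        · intro hpz
          exact le_antisymm hpz (hz0min p (hF hp) (le_trans hpz hz0mem.2))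
        · intro h; subst h; exact le_refl _
      rw [h1, Finset.filter_eq' F z0]
      split_ifs <;> simp
    rw [hpH]
    simp only
    unfold heightFn
    rw [key S Finset.subset_union_left, key T Finset.subset_union_right]
    ring
  have hz0W : z0 ∈ (S ∪ T).filter (fun z => z ≤ x ∧ pH z < i) :=
    Finset.mem_filter.mpr ⟨hz0mem.1, hz0mem.2, by omega⟩
  have hWne : ((S ∪ T).filter (fun z => z ≤ x ∧ pH z < i)).Nonempty := ⟨z0, hz0W⟩
  have hs'mem := Finset.mem_filter.mp (Finset.max'_mem _ hWne)
  set s' := ((S ∪ T).filter (fun z => z ≤ x ∧ pH z < i)).max' hWne with hs'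
  obtain ⟨hs'u, hs'x, hs'pH⟩ := hs'mem
  have claimA : ∀ y, s' ≤ y → y ≤ x → i ≤ heightFn S T y := by
    intro y hs'y hyx
    by_contra hge
    push_neg at hge
    rcases ((S ∪ T).filter (fun p => y < p ∧ p ≤ x)).eq_empty_or_nonempty with hV | hV
    · have : heightFn S T x = heightFn S T y := by
        refine heightFn_congr S T hyx (fun p hp hpx => ?_)
        by_contra hpy
        push_neg at hpy
        have : p ∈ (S ∪ T).filter (fun p => y < p ∧ p ≤ x) :=
          Finset.mem_filter.mpr ⟨hp, hpy, hpx⟩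
        simp [hV] at this
      omega
    · have hwmem := Finset.mem_filter.mp (Finset.min'_mem _ hV)
      set w := ((S ∪ T).filter (fun p => y < p ∧ p ≤ x)).min' hV with hw
      obtain ⟨hwu, hyw, hwx⟩ := hwmem
      have hgapw : ∀ p ∈ S ∪ T, ¬(y < p ∧ p < w) := by
        intro p hp hc
        have : p ∈ (S ∪ T).filter (fun p => y < p ∧ p ≤ x) :=
          Finset.mem_filter.mpr ⟨hp, hc.1, le_trans hc.2.le hwx⟩
        exact absurd (Finset.min'_le _ p this) (not_le.mpr hc.2)
      have hjump := heightFn_jump S T hyw hgapw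
      have hpHw : pH w = heightFn S T y := by rw [hpH]; simp only; omega
      have hwW : w ∈ (S ∪ T).filter (fun z => z ≤ x ∧ pH z < i) :=
        Finset.mem_filter.mpr ⟨hwu, hwx, by omega⟩
      have h1 : w ≤ s' := Finset.le_max' _ w hwW
      linarith
  have his' : i ≤ heightFn S T s' := claimA s' (le_refl _) hs'x
  have hjump : heightFn S T s' = pH s' + (if s' ∈ S then 1 else 0) - (if s' ∈ T then 1 else 0) := by
    rw [hpH]; simp only; ring
  have hs'S : s' ∈ S := by
    rcases Finset.mem_union.mp hs'u with h | h
    · exact h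
    · exfalso
      have hns : s' ∉ S := fun hc => (Finset.disjoint_left.mp hdisj hc) h
      rw [if_neg hns, if_pos h] at hjump
      omega
  have hnt : s' ∉ T := fun hc => (Finset.disjoint_left.mp hdisj hs'S) hc
  rw [if_pos hs'S, if_neg hnt] at hjump
  exact ⟨s', hs'S, hs'x, by omega, claimA⟩
/-- profit at a prescribed level `i` -/
noncomputable def levelProfit (S T : Finset ℝ) (N : ℝ → ℝ) (m : ℝ) (i : ℤ) (s : ℝ) : ℝ :=
  (∫ x in s..m, relHeight S T i x) - |s - N s|

lemma transport_up (S T : Finset ℝ) (hdisj : Disjoint S T) (hne : (S ∪ T).Nonempty)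
    (N : ℝ → ℝ) (hN : IsNearestNeighbor S T N)
    {i : ℤ} (hiK : i ≤ (S.card : ℤ) - T.card) {s : ℝ} (hsS : s ∈ S)
    (hs : heightFn S T s < i) :
    ∃ s' ∈ S, heightFn S T s' = i ∧ s < s' ∧
      levelProfit S T N ((S ∪ T).max' hne) i s ≤ levelProfit S T N ((S ∪ T).max' hne) i s' := by
  obtain ⟨s', hs'S, hss', hHs', hlt⟩ := exists_upcross S T hdisj hne hiK hs
  refine ⟨s', hs'S, hHs', hss', ?_⟩
  have hsplit : (∫ x in s..s', relHeight S T i x) + (∫ x in s'..((S ∪ T).max' hne), relHeight S T i x)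
      = ∫ x in s..((S ∪ T).max' hne), relHeight S T i x :=
    intervalIntegral.integral_add_adjacent_intervals
      (relHeight_intervalIntegrable S T i _ _) (relHeight_intervalIntegrable S T i _ _)
  have hconst : (∫ x in s..s', relHeight S T i x) = (s' - s) * (-1) := by
    refine integral_const_on hss'.le (fun y h1 h2 => ?_)
    unfold relHeight
    rw [if_neg (not_le.mpr (hlt y h1 h2))]
  have h2 : |s' - N s'| ≤ |s' - N s| := (hN s' hs'S).2 (N s) (hN s hsS).1
  have h3 : |s' - N s| ≤ |s' - s| + |s - N s| := abs_sub_le s' s (N s)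
  have h4 : |s' - s| = s' - s := abs_of_nonneg (by linarith)
  unfold levelProfit
  linarith [hsplit, hconst]

lemma transport_down (S T : Finset ℝ) (hdisj : Disjoint S T) (hne : (S ∪ T).Nonempty)
    (N : ℝ → ℝ) (hN : IsNearestNeighbor S T N)
    {i : ℤ} (hi1 : 1 ≤ i) {s : ℝ} (hsS : s ∈ S)
    (hs : i ≤ heightFn S T s) :
    ∃ s' ∈ S, heightFn S T s' = i ∧ s' ≤ s ∧
      levelProfit S T N ((S ∪ T).max' hne) i s ≤ levelProfit S T N ((S ∪ T).max' hne) i s' := by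
  obtain ⟨s', hs'S, hss', hHs', hge⟩ := exists_downcross S T hdisj hi1 hs
  refine ⟨s', hs'S, hHs', hss', ?_⟩
  have hsplit : (∫ x in s'..s, relHeight S T i x) + (∫ x in s..((S ∪ T).max' hne), relHeight S T i x)
      = ∫ x in s'..((S ∪ T).max' hne), relHeight S T i x :=
    intervalIntegral.integral_add_adjacent_intervals
      (relHeight_intervalIntegrable S T i _ _) (relHeight_intervalIntegrable S T i _ _)
  have hconst : (∫ x in s'..s, relHeight S T i x) = (s - s') * 1 := by
    refine integral_const_on hss' (fun y h1 h2 => ?_)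
    unfold relHeight
    rw [if_pos (hge y h1 h2.le)]
  have h2 : |s' - N s'| ≤ |s' - N s| := (hN s' hs'S).2 (N s) (hN s hsS).1
  have h3 : |s' - N s| ≤ |s' - s| + |s - N s| := abs_sub_le s' s (N s)
  have h4 : |s' - s| = s - s' := by rw [abs_sub_comm]; exact abs_of_nonneg (by linarith)
  unfold levelProfit
  linarith [hsplit, hconst]

lemma levelProfit_le_max (S T : Finset ℝ) (hdisj : Disjoint S T) (hne : (S ∪ T).Nonempty)
    (N : ℝ → ℝ) (hN : IsNearestNeighbor S T N)
    {i : ℤ} (hi1 : 1 ≤ i) (hiK : i ≤ (S.card : ℤ) - T.card) {ri : ℝ}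
    (hmax : ∀ s ∈ S, heightFn S T s = i →
      levelProfit S T N ((S ∪ T).max' hne) i s ≤ levelProfit S T N ((S ∪ T).max' hne) i ri) :
    ∀ s ∈ S, levelProfit S T N ((S ∪ T).max' hne) i s
      ≤ levelProfit S T N ((S ∪ T).max' hne) i ri := by
  intro s hsS
  rcases lt_trichotomy (heightFn S T s) i with h | h | h
  · obtain ⟨s', hs'S, hHs', _, hle⟩ := transport_up S T hdisj hne N hN hiK hsS h
    exact le_trans hle (hmax s' hs'S hHs')
  · exact hmax s hsS h
  · obtain ⟨s', hs'S, hHs', _, hle⟩ := transport_down S T hdisj hne N hN hi1 hsS h.le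
    exact le_trans hle (hmax s' hs'S hHs')
lemma relHeight_anti (S T : Finset ℝ) {a b : ℤ} (hab : a ≤ b) (x : ℝ) :
    relHeight S T b x ≤ relHeight S T a x := by
  unfold relHeight
  split_ifs with h1 h2
  · exact le_refl _
  · exact absurd (hab.trans h1) h2
  · norm_num
  · exact le_refl _

lemma chosen_lt (S T : Finset ℝ) (hdisj : Disjoint S T) (hne : (S ∪ T).Nonempty)
    (N : ℝ → ℝ) (hN : IsNearestNeighbor S T N)
    {a b : ℤ} (h1a : 1 ≤ a) (hab : a < b) (hbK : b ≤ (S.card : ℤ) - T.card)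
    {ra rb : ℝ} (hraS : ra ∈ S) (hrbS : rb ∈ S)
    (hHa : heightFn S T ra = a) (hHb : heightFn S T rb = b)
    (hmaxa : ∀ s ∈ S, heightFn S T s = a →
      levelProfit S T N ((S ∪ T).max' hne) a s ≤ levelProfit S T N ((S ∪ T).max' hne) a ra)
    (hmina : ∀ s ∈ S, heightFn S T s = a →
      levelProfit S T N ((S ∪ T).max' hne) a s = levelProfit S T N ((S ∪ T).max' hne) a ra →
        ra ≤ s)
    (hmaxb : ∀ s ∈ S, heightFn S T s = b →
      levelProfit S T N ((S ∪ T).max' hne) b s ≤ levelProfit S T N ((S ∪ T).max' hne) b rb) :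
    ra < rb := by
  by_contra hc
  push_neg at hc   -- rb ≤ ra
  -- transport rb down to level a
  obtain ⟨s', hs'S, hHs', hs'le, htb⟩ :=
    transport_down S T hdisj hne N hN h1a hrbS (by omega)
  -- transport ra up to level b
  obtain ⟨s'', hs''S, hHs'', _, htu⟩ :=
    transport_up S T hdisj hne N hN hbK hraS (by omega)
  have e1 := hmaxa s' hs'S hHs'
  have e3 := hmaxb s'' hs''S hHs''
  -- D identities
  have da : levelProfit S T N ((S ∪ T).max' hne) a ra - levelProfit S T N ((S ∪ T).max' hne) b ra
      = (∫ x in ra..((S ∪ T).max' hne), relHeight S T a x)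
        - (∫ x in ra..((S ∪ T).max' hne), relHeight S T b x) := by
    unfold levelProfit; ring
  have db : levelProfit S T N ((S ∪ T).max' hne) a rb - levelProfit S T N ((S ∪ T).max' hne) b rb
      = (∫ x in rb..((S ∪ T).max' hne), relHeight S T a x)
        - (∫ x in rb..((S ∪ T).max' hne), relHeight S T b x) := by
    unfold levelProfit; ring
  have sa : (∫ x in rb..ra, relHeight S T a x)
      + (∫ x in ra..((S ∪ T).max' hne), relHeight S T a x)
      = ∫ x in rb..((S ∪ T).max' hne), relHeight S T a x :=
    intervalIntegral.integral_add_adjacent_intervals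
      (relHeight_intervalIntegrable S T a _ _) (relHeight_intervalIntegrable S T a _ _)
  have sb : (∫ x in rb..ra, relHeight S T b x)
      + (∫ x in ra..((S ∪ T).max' hne), relHeight S T b x)
      = ∫ x in rb..((S ∪ T).max' hne), relHeight S T b x :=
    intervalIntegral.integral_add_adjacent_intervals
      (relHeight_intervalIntegrable S T b _ _) (relHeight_intervalIntegrable S T b _ _)
  have hmono : (∫ x in rb..ra, relHeight S T b x) ≤ ∫ x in rb..ra, relHeight S T a x :=
    intervalIntegral.integral_mono_on hc (relHeight_intervalIntegrable S T b _ _)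
      (relHeight_intervalIntegrable S T a _ _) (fun x _ => relHeight_anti S T hab.le x)
  -- collapse the chain
  have heq : levelProfit S T N ((S ∪ T).max' hne) a s'
      = levelProfit S T N ((S ∪ T).max' hne) a ra := by
    linarith
  have h5 : ra ≤ s' := hmina s' hs'S hHs' heq
  have h6 : ra = rb := le_antisymm (le_trans h5 hs'le) hc
  rw [h6, hHb] at hHa
  omega
lemma downclosed_mem_iff {K : ℕ} (F : Finset (Fin K))
    (hdc : ∀ j j' : Fin K, j' ≤ j → j ∈ F → j' ∈ F) (i : Fin K) :
    i ∈ F ↔ (i : ℕ) < F.card := by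
  constructor
  · intro hi
    have hsub : Finset.Iic i ⊆ F := fun j hj => hdc i j (Finset.mem_Iic.mp hj) hi
    have := Finset.card_le_card hsub
    rw [Fin.card_Iic] at this
    omega
  · intro hlt
    by_contra hi
    have hsub : F ⊆ Finset.Iio i := by
      intro j hj
      rw [Finset.mem_Iio]
      by_contra hji
      push_neg at hji
      exact hi (hdc j i hji hj)
    have := Finset.card_le_card hsub
    rw [Fin.card_Iio] at this
    omega

lemma orderEmb_le_iff (R : Finset ℝ) {K : ℕ} (h : R.card = K) (x : ℝ) (i : Fin K) :
    R.orderEmbOfFin h i ≤ x ↔ (i : ℕ) < (R.filter (fun ρ => ρ ≤ x)).card := by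
  classical
  set e := R.orderEmbOfFin h with he
  have himg : (Finset.univ.filter (fun j : Fin K => e j ≤ x)).image e
      = R.filter (fun ρ => ρ ≤ x) := by
    ext ρ
    simp only [Finset.mem_image, Finset.mem_filter, Finset.mem_univ, true_and]
    constructor
    · rintro ⟨j, hj, rfl⟩
      exact ⟨Finset.orderEmbOfFin_mem R h j, hj⟩
    · rintro ⟨hρR, hρx⟩
      have : ρ ∈ Set.range (⇑e) := by rw [he, Finset.range_orderEmbOfFin]; exact hρR
      obtain ⟨j, rfl⟩ := this
      exact ⟨j, hρx, rfl⟩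
  have hcards : (R.filter (fun ρ => ρ ≤ x)).card
      = (Finset.univ.filter (fun j : Fin K => e j ≤ x)).card := by
    rw [← himg, Finset.card_image_of_injective _ e.injective]
  rw [hcards]
  have hdc : ∀ j j' : Fin K, j' ≤ j → j ∈ (Finset.univ.filter (fun j : Fin K => e j ≤ x))
      → j' ∈ (Finset.univ.filter (fun j : Fin K => e j ≤ x)) := by
    intro j j' hj hjF
    rw [Finset.mem_filter] at hjF ⊢
    exact ⟨Finset.mem_univ _, le_trans (e.monotone hj) hjF.2⟩
  have hmem : e i ≤ x ↔ i ∈ (Finset.univ.filter (fun j : Fin K => e j ≤ x)) := by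
    rw [Finset.mem_filter]
    simp
  rw [hmem]
  exact downclosed_mem_iff _ hdc i
lemma pointwise_key (S T R : Finset ℝ) {K : ℕ} (hR : R.card = K) (x : ℝ) :
    |((heightFn S T x : ℝ)) - ((R.filter (fun ρ => ρ ≤ x)).card : ℝ)|
      = |((heightFn S T x : ℝ))|
        - ∑ i : Fin K, (if R.orderEmbOfFin hR i ≤ x then relHeight S T ((i:ℤ)+1) x else 0) := by
  classical
  have hjK : (R.filter (fun ρ => ρ ≤ x)).card ≤ K := hR ▸ Finset.card_filter_le _ _
  have hstep : ∀ i : Fin K,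
      (if R.orderEmbOfFin hR i ≤ x then relHeight S T ((i:ℤ)+1) x else 0)
        = (if (i:ℕ) < (R.filter (fun ρ => ρ ≤ x)).card
            then (if ((i:ℤ)+1 ≤ heightFn S T x) then (1:ℝ) else -1) else 0) := by
    intro i
    by_cases h : R.orderEmbOfFin hR i ≤ x
    · rw [if_pos h, if_pos ((orderEmb_le_iff R hR x i).mp h)]
      rfl
    · rw [if_neg h, if_neg (fun hc => h ((orderEmb_le_iff R hR x i).mpr hc))]
  rw [Finset.sum_congr rfl (fun i _ => hstep i)]
  rw [Fin.sum_univ_eq_sum_range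
    (fun i => (if i < (R.filter (fun ρ => ρ ≤ x)).card
      then (if ((i:ℤ)+1 ≤ heightFn S T x) then (1:ℝ) else -1) else 0))]
  rw [← Finset.sum_filter]
  have hfeq : (Finset.range K).filter (fun i => i < (R.filter (fun ρ => ρ ≤ x)).card)
      = Finset.range ((R.filter (fun ρ => ρ ≤ x)).card) := by
    ext i
    simp only [Finset.mem_filter, Finset.mem_range]
    omega
  rw [hfeq]
  exact abs_sub_nat_eq (heightFn S T x) _

lemma measurable_countcast (R : Finset ℝ) :
    Measurable (fun x => ((R.filter (fun ρ => ρ ≤ x)).card : ℝ)) := by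
  have h : (fun x => ((R.filter (fun ρ => ρ ≤ x)).card : ℝ))
      = (fun n : ℤ => (n : ℝ)) ∘ (heightFn R ∅) := by
    funext x
    simp [heightFn]
  rw [h]
  exact measurable_from_top.comp (measurable_heightFn R ∅)

lemma measurable_abs_diff (S T R : Finset ℝ) :
    Measurable (fun x => |((heightFn S T x : ℝ)) - ((R.filter (fun ρ => ρ ≤ x)).card : ℝ)|) :=
  ((measurable_from_top.comp (measurable_heightFn S T)).sub (measurable_countcast R)).abs

lemma abs_diff_bdd (S T R : Finset ℝ) (x : ℝ) :
    |(|((heightFn S T x : ℝ)) - ((R.filter (fun ρ => ρ ≤ x)).card : ℝ)|)|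
      ≤ (S.card : ℝ) + T.card + R.card := by
  rw [abs_abs]
  have h1 : |(heightFn S T x : ℝ)| ≤ (S.card : ℝ) + T.card := by
    have hZ : |heightFn S T x| ≤ (S.card : ℤ) + T.card := by
      have hS : ((S.filter (fun s => s ≤ x)).card : ℤ) ≤ S.card := by
        exact_mod_cast Finset.card_filter_le _ _
      have hT : ((T.filter (fun t => t ≤ x)).card : ℤ) ≤ T.card := by
        exact_mod_cast Finset.card_filter_le _ _
      have h0S : (0:ℤ) ≤ ((S.filter (fun s => s ≤ x)).card : ℤ) := by positivity
      have h0T : (0:ℤ) ≤ ((T.filter (fun t => t ≤ x)).card : ℤ) := by positivity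
      unfold heightFn
      rw [abs_le]
      omega
    rw [← Int.cast_abs]
    exact_mod_cast hZ
  have h2 : ((R.filter (fun ρ => ρ ≤ x)).card : ℝ) ≤ (R.card : ℝ) := by
    exact_mod_cast Finset.card_filter_le _ _
  have h3 : (0:ℝ) ≤ ((R.filter (fun ρ => ρ ≤ x)).card : ℝ) := by positivity
  calc |((heightFn S T x : ℝ)) - ((R.filter (fun ρ => ρ ≤ x)).card : ℝ)|
      ≤ |((heightFn S T x : ℝ))| + |((R.filter (fun ρ => ρ ≤ x)).card : ℝ)| := abs_sub _ _
    _ ≤ ((S.card : ℝ) + T.card) + R.card := by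
        rw [abs_of_nonneg h3]
        exact add_le_add h1 h2

lemma absH_intervalIntegrable (S T : Finset ℝ) (a b : ℝ) :
    IntervalIntegrable (fun x => |((heightFn S T x : ℝ))|) volume a b := by
  refine aux_intervalIntegrable ((measurable_from_top.comp (measurable_heightFn S T)).abs)
    (C := (S.card : ℝ) + T.card + ((∅:Finset ℝ).card : ℝ)) ?_ a b
  intro x
  have := abs_diff_bdd S T ∅ x
  simpa using this

lemma absdiff_intervalIntegrable (S T R : Finset ℝ) (a b : ℝ) :
    IntervalIntegrable
      (fun x => |((heightFn S T x : ℝ)) - ((R.filter (fun ρ => ρ ≤ x)).card : ℝ)|) volume a b :=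
  aux_intervalIntegrable (measurable_abs_diff S T R) (abs_diff_bdd S T R) a b

lemma ite_relHeight_intervalIntegrable (S T : Finset ℝ) (k : ℤ) (p a b : ℝ) :
    IntervalIntegrable (fun x => if p ≤ x then relHeight S T k x else 0) volume a b := by
  refine aux_intervalIntegrable ?_ (C := 1) ?_ a b
  · exact Measurable.ite measurableSet_Ici (measurable_relHeight S T k) measurable_const
  · intro x
    by_cases h : p ≤ x
    · rw [if_pos h]; exact abs_relHeight_le S T k x
    · rw [if_neg h]; norm_num

lemma ite_integral_eq (S T : Finset ℝ) (k : ℤ) {α p m : ℝ} (hαp : α ≤ p) (hpm : p ≤ m) :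
    ∫ x in α..m, (if p ≤ x then relHeight S T k x else 0)
      = ∫ x in p..m, relHeight S T k x := by
  have hsplit : (∫ x in α..p, (if p ≤ x then relHeight S T k x else 0))
      + (∫ x in p..m, (if p ≤ x then relHeight S T k x else 0))
      = ∫ x in α..m, (if p ≤ x then relHeight S T k x else 0) :=
    intervalIntegral.integral_add_adjacent_intervals
      (ite_relHeight_intervalIntegrable S T k p α p) (ite_relHeight_intervalIntegrable S T k p p m)
  have h1 : (∫ x in α..p, (if p ≤ x then relHeight S T k x else 0)) = (p - α) * 0 := by
    refine integral_const_on hαp (fun y _ hy => ?_)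
    rw [if_neg (not_le.mpr hy)]
  have h2 : (∫ x in p..m, (if p ≤ x then relHeight S T k x else 0))
      = ∫ x in p..m, relHeight S T k x := by
    refine intervalIntegral.integral_congr (fun y hy => ?_)
    rw [Set.uIcc_of_le hpm] at hy
    rw [if_pos hy.1]
  rw [← hsplit, h1, h2]
  ring

lemma integral_key (S T R : Finset ℝ) {K : ℕ} (hR : R.card = K) {α m : ℝ}
    (hαR : ∀ ρ ∈ R, α ≤ ρ) (hRm : ∀ ρ ∈ R, ρ ≤ m) :
    ∫ x in α..m, |((heightFn S T x : ℝ)) - ((R.filter (fun ρ => ρ ≤ x)).card : ℝ)|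
      = (∫ x in α..m, |((heightFn S T x : ℝ))|)
        - ∑ i : Fin K, ∫ x in (R.orderEmbOfFin hR i)..m, relHeight S T ((i:ℤ)+1) x := by
  have hrw : (fun x => |((heightFn S T x : ℝ)) - ((R.filter (fun ρ => ρ ≤ x)).card : ℝ)|)
      = fun x => |((heightFn S T x : ℝ))|
        - ∑ i : Fin K, (if R.orderEmbOfFin hR i ≤ x then relHeight S T ((i:ℤ)+1) x else 0) :=
    funext (pointwise_key S T R hR)
  have hii : ∀ i : Fin K, IntervalIntegrable
      (fun x => if R.orderEmbOfFin hR i ≤ x then relHeight S T ((i:ℤ)+1) x else 0) volume α m :=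
    fun i => ite_relHeight_intervalIntegrable S T _ _ α m
  have hsum_ii : IntervalIntegrable
      (fun x => ∑ i : Fin K, (if R.orderEmbOfFin hR i ≤ x then relHeight S T ((i:ℤ)+1) x else 0))
      volume α m := by
    have h5 := IntervalIntegrable.sum (μ := volume) (a := α) (b := m) Finset.univ
      (f := fun (i : Fin K) x => (if R.orderEmbOfFin hR i ≤ x then relHeight S T ((i:ℤ)+1) x else 0))
      (fun i _ => hii i)
    have heqf : (fun x => ∑ i : Fin K,
        (if R.orderEmbOfFin hR i ≤ x then relHeight S T ((i:ℤ)+1) x else 0))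
        = (∑ i : Fin K, fun x =>
            (if R.orderEmbOfFin hR i ≤ x then relHeight S T ((i:ℤ)+1) x else 0)) := by
      funext x
      rw [Finset.sum_apply]
    rw [heqf]
    exact h5
  calc ∫ x in α..m, |((heightFn S T x : ℝ)) - ((R.filter (fun ρ => ρ ≤ x)).card : ℝ)|
      = ∫ x in α..m, (|((heightFn S T x : ℝ))|
        - ∑ i : Fin K, (if R.orderEmbOfFin hR i ≤ x then relHeight S T ((i:ℤ)+1) x else 0)) := by
        rw [hrw]
    _ = (∫ x in α..m, |((heightFn S T x : ℝ))|)
        - ∫ x in α..m, (∑ i : Fin K,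
            (if R.orderEmbOfFin hR i ≤ x then relHeight S T ((i:ℤ)+1) x else 0)) := by
        exact intervalIntegral.integral_sub (absH_intervalIntegrable S T α m) hsum_ii
    _ = (∫ x in α..m, |((heightFn S T x : ℝ))|)
        - ∑ i : Fin K, ∫ x in α..m,
            (if R.orderEmbOfFin hR i ≤ x then relHeight S T ((i:ℤ)+1) x else 0) := by
        rw [intervalIntegral.integral_finset_sum (fun i _ => hii i)]
    _ = (∫ x in α..m, |((heightFn S T x : ℝ))|)
        - ∑ i : Fin K, ∫ x in (R.orderEmbOfFin hR i)..m, relHeight S T ((i:ℤ)+1) x := by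
        congr 1
        refine Finset.sum_congr rfl (fun i _ => ?_)
        exact ite_integral_eq S T _ (hαR _ (Finset.orderEmbOfFin_mem R hR i))
          (hRm _ (Finset.orderEmbOfFin_mem R hR i))
lemma image_orderEmbOfFin (F : Finset ℝ) {n : ℕ} (h : F.card = n) :
    Finset.univ.image (F.orderEmbOfFin h) = F := by
  apply Finset.coe_injective
  rw [Finset.coe_image, Finset.coe_univ, Set.image_univ, Finset.range_orderEmbOfFin]

lemma count_eq_sum (F : Finset ℝ) {n : ℕ} (h : F.card = n) (x : ℝ) :
    ((F.filter (fun ρ => ρ ≤ x)).card : ℝ)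
      = ∑ i : Fin n, (if F.orderEmbOfFin h i ≤ x then (1:ℝ) else 0) := by
  have h1 : ((F.filter (fun ρ => ρ ≤ x)).card : ℝ)
      = ∑ ρ ∈ F, (if ρ ≤ x then (1:ℝ) else 0) := by
    rw [Finset.card_filter]
    push_cast
    rfl
  rw [h1]
  conv_lhs => rw [← image_orderEmbOfFin F h]
  rw [Finset.sum_image (fun a _ b _ hab => (F.orderEmbOfFin h).injective hab)]

lemma count_eq_sum' (T : Finset ℝ) (f : ℝ → ℝ)
    (hinj : ∀ t1 ∈ T, ∀ t2 ∈ T, f t1 = f t2 → t1 = t2) (x : ℝ) :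
    (((T.image f).filter (fun ρ => ρ ≤ x)).card : ℝ)
      = ∑ t ∈ T, (if f t ≤ x then (1:ℝ) else 0) := by
  have h1 : (((T.image f).filter (fun ρ => ρ ≤ x)).card : ℝ)
      = ∑ ρ ∈ T.image f, (if ρ ≤ x then (1:ℝ) else 0) := by
    rw [Finset.card_filter]
    push_cast
    rfl
  rw [h1, Finset.sum_image hinj]

lemma matching_lower (T M : Finset ℝ) (f : ℝ → ℝ)
    (hinj : ∀ t1 ∈ T, ∀ t2 ∈ T, f t1 = f t2 → t1 = t2) (hM : M = T.image f)
    {α m : ℝ} (hαm : α ≤ m)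
    (hbM : ∀ t ∈ T, α ≤ f t ∧ f t ≤ m) (hbT : ∀ t ∈ T, α ≤ t ∧ t ≤ m) :
    ∫ x in α..m, |((M.filter (fun ρ => ρ ≤ x)).card : ℝ) - ((T.filter (fun ρ => ρ ≤ x)).card : ℝ)|
      ≤ ∑ t ∈ T, |f t - t| := by
  classical
  have hcM : ∀ x, ((M.filter (fun ρ => ρ ≤ x)).card : ℝ)
      = ∑ t ∈ T, (if f t ≤ x then (1:ℝ) else 0) := by
    intro x; rw [hM]; exact count_eq_sum' T f hinj x
  have hcT : ∀ x, ((T.filter (fun ρ => ρ ≤ x)).card : ℝ)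
      = ∑ t ∈ T, (if t ≤ x then (1:ℝ) else 0) := by
    intro x
    rw [Finset.card_filter]
    push_cast
    rfl
  have hpt : ∀ x, |((M.filter (fun ρ => ρ ≤ x)).card : ℝ) - ((T.filter (fun ρ => ρ ≤ x)).card : ℝ)|
      ≤ ∑ t ∈ T, |(if f t ≤ x then (1:ℝ) else 0) - (if t ≤ x then 1 else 0)| := by
    intro x
    rw [hcM, hcT, ← Finset.sum_sub_distrib]
    exact Finset.abs_sum_le_sum_abs _ _
  have hiiL : IntervalIntegrable (fun x =>
      |((M.filter (fun ρ => ρ ≤ x)).card : ℝ) - ((T.filter (fun ρ => ρ ≤ x)).card : ℝ)|)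
      volume α m := by
    refine aux_intervalIntegrable (((measurable_countcast M).sub (measurable_countcast T)).abs)
      (C := (M.card : ℝ) + T.card) ?_ α m
    intro x
    rw [abs_abs]
    have h2 : ∀ F : Finset ℝ, ((F.filter (fun ρ => ρ ≤ x)).card : ℝ) ≤ (F.card : ℝ) := by
      intro F; exact_mod_cast Finset.card_filter_le _ _
    have h3 : ∀ F : Finset ℝ, (0:ℝ) ≤ ((F.filter (fun ρ => ρ ≤ x)).card : ℝ) := by
      intro F; positivity
    rw [Pi.sub_apply, abs_le]
    constructor <;> [linarith [h2 M, h2 T, h3 M, h3 T]; linarith [h2 M, h2 T, h3 M, h3 T]]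
  have hiiR : IntervalIntegrable (fun x =>
      ∑ t ∈ T, |(if f t ≤ x then (1:ℝ) else 0) - (if t ≤ x then 1 else 0)|) volume α m := by
    have h5 := IntervalIntegrable.sum (μ := volume) (a := α) (b := m) T
      (f := fun t x => |(if f t ≤ x then (1:ℝ) else 0) - (if t ≤ x then 1 else 0)|)
      (fun t _ => ind_ii (f t) t α m)
    have heqf : (fun x => ∑ t ∈ T, |(if f t ≤ x then (1:ℝ) else 0) - (if t ≤ x then 1 else 0)|)
        = (∑ t ∈ T, fun x => |(if f t ≤ x then (1:ℝ) else 0) - (if t ≤ x then 1 else 0)|) := by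
      funext x; rw [Finset.sum_apply]
    rw [heqf]; exact h5
  calc ∫ x in α..m, |((M.filter (fun ρ => ρ ≤ x)).card : ℝ)
        - ((T.filter (fun ρ => ρ ≤ x)).card : ℝ)|
      ≤ ∫ x in α..m, ∑ t ∈ T, |(if f t ≤ x then (1:ℝ) else 0) - (if t ≤ x then 1 else 0)| :=
        intervalIntegral.integral_mono_on hαm hiiL hiiR (fun x _ => hpt x)
    _ = ∑ t ∈ T, ∫ x in α..m, |(if f t ≤ x then (1:ℝ) else 0) - (if t ≤ x then 1 else 0)| :=
        intervalIntegral.integral_finset_sum (fun t _ => ind_ii (f t) t α m)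
    _ = ∑ t ∈ T, |f t - t| := by
        refine Finset.sum_congr rfl (fun t ht => ?_)
        exact integral_abs_ind (hbM t ht).1 (hbM t ht).2 (hbT t ht).1 (hbT t ht).2
lemma matching_sorted (M T : Finset ℝ) {n : ℕ} (hM : M.card = n) (hT : T.card = n)
    {α m : ℝ} (hαm : α ≤ m)
    (hbM : ∀ p ∈ M, α ≤ p ∧ p ≤ m) (hbT : ∀ p ∈ T, α ≤ p ∧ p ≤ m) :
    ∫ x in α..m, |((M.filter (fun ρ => ρ ≤ x)).card : ℝ) - ((T.filter (fun ρ => ρ ≤ x)).card : ℝ)|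
      = ∑ i : Fin n, |M.orderEmbOfFin hM i - T.orderEmbOfFin hT i| := by
  classical
  have samesign : ∀ x : ℝ,
      |∑ i : Fin n, ((if M.orderEmbOfFin hM i ≤ x then (1:ℝ) else 0)
          - (if T.orderEmbOfFin hT i ≤ x then 1 else 0))|
        = ∑ i : Fin n, |(if M.orderEmbOfFin hM i ≤ x then (1:ℝ) else 0)
          - (if T.orderEmbOfFin hT i ≤ x then 1 else 0)| := by
    intro x
    have dich : (∀ i : Fin n, 0 ≤ (if M.orderEmbOfFin hM i ≤ x then (1:ℝ) else 0)
          - (if T.orderEmbOfFin hT i ≤ x then 1 else 0))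
        ∨ (∀ i : Fin n, (if M.orderEmbOfFin hM i ≤ x then (1:ℝ) else 0)
          - (if T.orderEmbOfFin hT i ≤ x then 1 else 0) ≤ 0) := by
      by_cases hpos : ∀ i : Fin n, 0 ≤ (if M.orderEmbOfFin hM i ≤ x then (1:ℝ) else 0)
          - (if T.orderEmbOfFin hT i ≤ x then 1 else 0)
      · exact Or.inl hpos
      · right
        push_neg at hpos
        obtain ⟨l, hl⟩ := hpos
        have hfl : T.orderEmbOfFin hT l ≤ x ∧ ¬(M.orderEmbOfFin hM l ≤ x) := by
          by_cases c1 : M.orderEmbOfFin hM l ≤ x <;> by_cases c2 : T.orderEmbOfFin hT l ≤ x <;>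
            simp [c1, c2] at hl ⊢ <;> linarith
        intro i
        by_contra hi
        push_neg at hi
        have hfi : M.orderEmbOfFin hM i ≤ x ∧ ¬(T.orderEmbOfFin hT i ≤ x) := by
          by_cases c1 : M.orderEmbOfFin hM i ≤ x <;> by_cases c2 : T.orderEmbOfFin hT i ≤ x <;>
            simp [c1, c2] at hi ⊢ <;> linarith
        have h1 : i < l := by
          have := lt_of_le_of_lt hfi.1 (not_le.mp hfl.2)
          exact (M.orderEmbOfFin hM).lt_iff_lt.mp this
        have h2 : l < i := by
          have := lt_of_le_of_lt hfl.1 (not_le.mp hfi.2)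
          exact (T.orderEmbOfFin hT).lt_iff_lt.mp this
        exact absurd (h1.trans h2) (lt_irrefl i)
    rcases dich with h | h
    · rw [abs_of_nonneg (Finset.sum_nonneg (fun i _ => h i))]
      exact (Finset.sum_congr rfl (fun i _ => abs_of_nonneg (h i))).symm
    · rw [abs_of_nonpos (Finset.sum_nonpos (fun i _ => h i))]
      rw [← Finset.sum_neg_distrib]
      exact (Finset.sum_congr rfl (fun i _ => abs_of_nonpos (h i))).symm
  have hpt : ∀ x, |((M.filter (fun ρ => ρ ≤ x)).card : ℝ) - ((T.filter (fun ρ => ρ ≤ x)).card : ℝ)|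
      = ∑ i : Fin n, |(if M.orderEmbOfFin hM i ≤ x then (1:ℝ) else 0)
          - (if T.orderEmbOfFin hT i ≤ x then 1 else 0)| := by
    intro x
    rw [count_eq_sum M hM x, count_eq_sum T hT x, ← Finset.sum_sub_distrib]
    exact samesign x
  calc ∫ x in α..m, |((M.filter (fun ρ => ρ ≤ x)).card : ℝ)
        - ((T.filter (fun ρ => ρ ≤ x)).card : ℝ)|
      = ∫ x in α..m, ∑ i : Fin n, |(if M.orderEmbOfFin hM i ≤ x then (1:ℝ) else 0)
          - (if T.orderEmbOfFin hT i ≤ x then 1 else 0)| := by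
        refine intervalIntegral.integral_congr (fun y _ => hpt y)
    _ = ∑ i : Fin n, ∫ x in α..m, |(if M.orderEmbOfFin hM i ≤ x then (1:ℝ) else 0)
          - (if T.orderEmbOfFin hT i ≤ x then 1 else 0)| :=
        intervalIntegral.integral_finset_sum (fun i _ => ind_ii _ _ α m)
    _ = ∑ i : Fin n, |M.orderEmbOfFin hM i - T.orderEmbOfFin hT i| := by
        refine Finset.sum_congr rfl (fun i _ => ?_)
        have h1 := hbM _ (Finset.orderEmbOfFin_mem M hM i)
        have h2 := hbT _ (Finset.orderEmbOfFin_mem T hT i)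
        exact integral_abs_ind h1.1 h1.2 h2.1 h2.2
lemma filter_sdiff_card (S R : Finset ℝ) (hRS : R ⊆ S) (x : ℝ) :
    (((S \ R).filter (fun ρ => ρ ≤ x)).card : ℝ)
      = ((S.filter (fun ρ => ρ ≤ x)).card : ℝ) - ((R.filter (fun ρ => ρ ≤ x)).card : ℝ) := by
  classical
  have h1 : (S \ R).filter (fun ρ => ρ ≤ x) = S.filter (fun ρ => ρ ≤ x) \ R.filter (fun ρ => ρ ≤ x) := by
    ext a
    simp only [Finset.mem_filter, Finset.mem_sdiff]
    tauto
  rw [h1, Finset.card_sdiff_of_subset (Finset.filter_subset_filter _ hRS)]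
  have := Finset.card_le_card (Finset.filter_subset_filter (fun ρ => ρ ≤ x) hRS)
  push_cast [Nat.cast_sub this]
  ring

lemma sum_orderEmb (F : Finset ℝ) {n : ℕ} (h : F.card = n) (g : ℝ → ℝ) :
    ∑ s ∈ F, g s = ∑ i : Fin n, g (F.orderEmbOfFin h i) := by
  conv_lhs => rw [← image_orderEmbOfFin F h]
  rw [Finset.sum_image (fun a _ b _ hab => (F.orderEmbOfFin h).injective hab)]

/-- if for each `1 ≤ k ≤ K = |S| − |T|`, `r_k` is the smallest
profit-maximizer among points of `S` of height `k`, and `R = {r_1, …, r_K}`, then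
the assignment `A_R` has minimum cost among all assignments from `S` to `T`. -/
theorem assignment_algorithm_min_cost (S T : Finset ℝ)
    (hdisj : Disjoint S T) (hST : T.card < S.card) (hT : 1 ≤ T.card)
    (hne : (S ∪ T).Nonempty)
    (N : ℝ → ℝ) (hN : IsNearestNeighbor S T N)
    (r : Fin (S.card - T.card) → ℝ)
    (hr : ∀ k, r k ∈ S ∧ heightFn S T (r k) = (k : ℤ) + 1 ∧
      (∀ s ∈ S, heightFn S T s = (k : ℤ) + 1 →
        profit S T N ((S ∪ T).max' hne) s ≤ profit S T N ((S ∪ T).max' hne) (r k)) ∧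
      (∀ s ∈ S, heightFn S T s = (k : ℤ) + 1 →
        profit S T N ((S ∪ T).max' hne) s = profit S T N ((S ∪ T).max' hne) (r k) →
          r k ≤ s))
    (A : ℝ → ℝ) (hA : IsAR S T (Finset.image r Finset.univ) N A) :
    ∀ A' : ℝ → ℝ, IsAssignment S T A' →
      ∑ s ∈ S, |s - A s| ≤ ∑ s ∈ S, |s - A' s| := by
  classical
  intro A' hA'
  obtain ⟨hA'1, hA'2⟩ := hA'
  obtain ⟨hA1, hcard, hA2⟩ := hA
  -- notation
  have hαm : (S ∪ T).min' hne ≤ (S ∪ T).max' hne := Finset.min'_le _ _ (Finset.max'_mem _ hne)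
  have hbnd : ∀ p ∈ S ∪ T, (S ∪ T).min' hne ≤ p ∧ p ≤ (S ∪ T).max' hne :=
    fun p hp => ⟨Finset.min'_le _ p hp, Finset.le_max' _ p hp⟩
  have hbndS : ∀ p ∈ S, (S ∪ T).min' hne ≤ p ∧ p ≤ (S ∪ T).max' hne :=
    fun p hp => hbnd p (Finset.mem_union_left _ hp)
  have hbndT : ∀ p ∈ T, (S ∪ T).min' hne ≤ p ∧ p ≤ (S ∪ T).max' hne :=
    fun p hp => hbnd p (Finset.mem_union_right _ hp)
  -- profit = levelProfit at the right level
  have hprofit : ∀ s, ∀ k : Fin (S.card - T.card), heightFn S T s = (k : ℤ) + 1 →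
      profit S T N ((S ∪ T).max' hne) s
        = levelProfit S T N ((S ∪ T).max' hne) ((k : ℤ) + 1) s := by
    intro s k hk
    unfold profit levelProfit
    rw [hk]
  have hmax' : ∀ k : Fin (S.card - T.card), ∀ s ∈ S, heightFn S T s = (k : ℤ) + 1 →
      levelProfit S T N ((S ∪ T).max' hne) ((k : ℤ) + 1) s
        ≤ levelProfit S T N ((S ∪ T).max' hne) ((k : ℤ) + 1) (r k) := by
    intro k s hs hk
    have h1 := (hr k).2.2.1 s hs hk
    rw [hprofit s k hk, hprofit (r k) k (hr k).2.1] at h1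
    exact h1
  have hmin' : ∀ k : Fin (S.card - T.card), ∀ s ∈ S, heightFn S T s = (k : ℤ) + 1 →
      levelProfit S T N ((S ∪ T).max' hne) ((k : ℤ) + 1) s
        = levelProfit S T N ((S ∪ T).max' hne) ((k : ℤ) + 1) (r k) → r k ≤ s := by
    intro k s hs hk heq
    refine (hr k).2.2.2 s hs hk ?_
    rw [hprofit s k hk, hprofit (r k) k (hr k).2.1]
    exact heq
  have hKbound : ∀ k : Fin (S.card - T.card), ((k : ℕ) : ℤ) + 1 ≤ (S.card : ℤ) - T.card := by
    intro k
    have h1 := k.isLt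
    have h2 : (k : ℕ) < S.card - T.card := h1
    omega
  -- r is strictly monotone
  have hmono : StrictMono r := by
    intro k l hkl
    refine chosen_lt S T hdisj hne N hN (a := (k : ℤ) + 1) (b := (l : ℤ) + 1)
      (by omega) (by
        have : (k : ℕ) < (l : ℕ) := hkl
        omega) (hKbound l) (hr k).1 (hr l).1 (hr k).2.1 (hr l).2.1
      (hmax' k) (hmin' k) (hmax' l)
  have hrinj : Function.Injective r := hmono.injective
  -- the set R⋆
  have hRcard : (Finset.image r Finset.univ).card = S.card - T.card := by
    rw [Finset.card_image_of_injective _ hrinj, Finset.card_univ, Fintype.card_fin]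
  have hRsub : Finset.image r Finset.univ ⊆ S := by
    intro ρ hρ
    obtain ⟨k, _, rfl⟩ := Finset.mem_image.mp hρ
    exact (hr k).1
  have hemb : ∀ i : Fin (S.card - T.card),
      (Finset.image r Finset.univ).orderEmbOfFin hRcard i = r i := by
    intro i
    have := Finset.orderEmbOfFin_unique hRcard
      (f := r) (fun k => Finset.mem_image_of_mem r (Finset.mem_univ k)) hmono
    exact (congrFun this i).symm
  -- ===== upper bound : cost of A =====
  have hsum_split : ∑ s ∈ S \ Finset.image r Finset.univ, |s - A s|
      + ∑ s ∈ Finset.image r Finset.univ, |s - A s| = ∑ s ∈ S, |s - A s| :=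
    Finset.sum_sdiff hRsub
  have hsumR : ∑ s ∈ Finset.image r Finset.univ, |s - A s|
      = ∑ k : Fin (S.card - T.card), |r k - N (r k)| := by
    rw [Finset.sum_image (fun a _ b _ hab => hrinj hab)]
    refine Finset.sum_congr rfl (fun k _ => ?_)
    rw [hA1 (r k) (Finset.mem_image_of_mem r (Finset.mem_univ k))]
  have hsumM : ∑ s ∈ S \ Finset.image r Finset.univ, |s - A s|
      = ∑ k : Fin T.card, |(S \ Finset.image r Finset.univ).orderEmbOfFin hcard k
          - T.orderEmbOfFin rfl k| := by
    rw [sum_orderEmb _ hcard]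
    refine Finset.sum_congr rfl (fun k _ => ?_)
    rw [hA2 k]
  -- sorted matching = integral
  have hmatch : ∑ k : Fin T.card, |(S \ Finset.image r Finset.univ).orderEmbOfFin hcard k
        - T.orderEmbOfFin rfl k|
      = ∫ x in ((S ∪ T).min' hne)..((S ∪ T).max' hne),
          |(((S \ Finset.image r Finset.univ).filter (fun ρ => ρ ≤ x)).card : ℝ)
            - ((T.filter (fun ρ => ρ ≤ x)).card : ℝ)| := by
    refine (matching_sorted _ T hcard rfl hαm ?_ hbndT).symm
    intro p hp
    exact hbndS p (Finset.mem_sdiff.mp hp).1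
  have hptA : ∀ x : ℝ, |(((S \ Finset.image r Finset.univ).filter (fun ρ => ρ ≤ x)).card : ℝ)
        - ((T.filter (fun ρ => ρ ≤ x)).card : ℝ)|
      = |((heightFn S T x : ℝ))
        - (((Finset.image r Finset.univ).filter (fun ρ => ρ ≤ x)).card : ℝ)| := by
    intro x
    rw [filter_sdiff_card S _ hRsub x]
    have hh : ((heightFn S T x : ℝ))
        = ((S.filter (fun ρ => ρ ≤ x)).card : ℝ) - ((T.filter (fun ρ => ρ ≤ x)).card : ℝ) := by
      unfold heightFn
      push_cast
      ring
    rw [hh]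
    ring_nf
  have hkey := integral_key S T (Finset.image r Finset.univ) hRcard
    (α := (S ∪ T).min' hne) (m := (S ∪ T).max' hne)
    (fun ρ hρ => (hbndS ρ (hRsub hρ)).1) (fun ρ hρ => (hbndS ρ (hRsub hρ)).2)
  have hupper : ∑ s ∈ S, |s - A s|
      = (∫ x in ((S ∪ T).min' hne)..((S ∪ T).max' hne), |((heightFn S T x : ℝ))|)
        - ∑ i : Fin (S.card - T.card),
            levelProfit S T N ((S ∪ T).max' hne) ((i : ℤ) + 1) (r i) := by
    rw [← hsum_split, hsumR, hsumM, hmatch]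
    rw [intervalIntegral.integral_congr (fun y _ => hptA y)]
    rw [hkey]
    unfold levelProfit
    rw [Finset.sum_sub_distrib]
    have : ∀ i : Fin (S.card - T.card),
        (∫ x in ((Finset.image r Finset.univ).orderEmbOfFin hRcard i)..((S ∪ T).max' hne),
          relHeight S T ((i:ℤ)+1) x)
        = ∫ x in (r i)..((S ∪ T).max' hne), relHeight S T ((i:ℤ)+1) x := by
      intro i; rw [hemb i]
    rw [Finset.sum_congr rfl (fun i _ => this i)]
    ring
  -- ===== lower bound : cost of A' =====
  -- choose a section f of A'
  set f : ℝ → ℝ := fun t => if ht : t ∈ T then (hA'2 t ht).choose else 0 with hf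
  have hfS : ∀ t ∈ T, f t ∈ S := by
    intro t ht
    rw [hf]
    simp only [dif_pos ht]
    exact (hA'2 t ht).choose_spec.1
  have hfA : ∀ t ∈ T, A' (f t) = t := by
    intro t ht
    rw [hf]
    simp only [dif_pos ht]
    exact (hA'2 t ht).choose_spec.2
  have hfinj : ∀ t1 ∈ T, ∀ t2 ∈ T, f t1 = f t2 → t1 = t2 := by
    intro t1 ht1 t2 ht2 h12
    rw [← hfA t1 ht1, ← hfA t2 ht2, h12]
  have hMS : T.image f ⊆ S := by
    intro ρ hρ
    obtain ⟨t, ht, rfl⟩ := Finset.mem_image.mp hρ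
    exact hfS t ht
  have hMcard : (T.image f).card = T.card := Finset.card_image_of_injOn hfinj
  have hR'card : (S \ T.image f).card = S.card - T.card := by
    rw [Finset.card_sdiff_of_subset hMS, hMcard]
  -- split cost of A'
  have hsplit' : ∑ s ∈ S \ T.image f, |s - A' s| + ∑ s ∈ T.image f, |s - A' s|
      = ∑ s ∈ S, |s - A' s| := Finset.sum_sdiff hMS
  have hsumM' : ∑ s ∈ T.image f, |s - A' s| = ∑ t ∈ T, |f t - t| := by
    rw [Finset.sum_image hfinj]
    refine Finset.sum_congr rfl (fun t ht => ?_)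
    rw [hfA t ht]
  have hlowM : ∫ x in ((S ∪ T).min' hne)..((S ∪ T).max' hne),
        |(((T.image f).filter (fun ρ => ρ ≤ x)).card : ℝ)
          - ((T.filter (fun ρ => ρ ≤ x)).card : ℝ)|
      ≤ ∑ t ∈ T, |f t - t| :=
    matching_lower T (T.image f) f hfinj rfl hαm
      (fun t ht => hbndS (f t) (hfS t ht)) hbndT
  have hptA' : ∀ x : ℝ, |(((T.image f).filter (fun ρ => ρ ≤ x)).card : ℝ)
        - ((T.filter (fun ρ => ρ ≤ x)).card : ℝ)|
      = |((heightFn S T x : ℝ))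
        - (((S \ T.image f).filter (fun ρ => ρ ≤ x)).card : ℝ)| := by
    intro x
    rw [filter_sdiff_card S _ hMS x]
    have hh : ((heightFn S T x : ℝ))
        = ((S.filter (fun ρ => ρ ≤ x)).card : ℝ) - ((T.filter (fun ρ => ρ ≤ x)).card : ℝ) := by
      unfold heightFn
      push_cast
      ring
    rw [hh]
    ring_nf
  have hkey' := integral_key S T (S \ T.image f) hR'card
    (α := (S ∪ T).min' hne) (m := (S ∪ T).max' hne)
    (fun ρ hρ => (hbndS ρ (Finset.mem_sdiff.mp hρ).1).1)
    (fun ρ hρ => (hbndS ρ (Finset.mem_sdiff.mp hρ).1).2)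
  have hsumR' : ∑ s ∈ S \ T.image f, |s - A' s|
      ≥ ∑ i : Fin (S.card - T.card),
          |(S \ T.image f).orderEmbOfFin hR'card i - N ((S \ T.image f).orderEmbOfFin hR'card i)| := by
    rw [← sum_orderEmb _ hR'card (fun s => |s - N s|)]
    refine Finset.sum_le_sum (fun s hs => ?_)
    have hsS : s ∈ S := (Finset.mem_sdiff.mp hs).1
    exact (hN s hsS).2 (A' s) (hA'1 s hsS)
  have hlower : ∑ s ∈ S, |s - A' s|
      ≥ (∫ x in ((S ∪ T).min' hne)..((S ∪ T).max' hne), |((heightFn S T x : ℝ))|)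
        - ∑ i : Fin (S.card - T.card),
            levelProfit S T N ((S ∪ T).max' hne) ((i : ℤ) + 1)
              ((S \ T.image f).orderEmbOfFin hR'card i) := by
    have e1 : ∫ x in ((S ∪ T).min' hne)..((S ∪ T).max' hne),
        |(((T.image f).filter (fun ρ => ρ ≤ x)).card : ℝ)
          - ((T.filter (fun ρ => ρ ≤ x)).card : ℝ)|
        = (∫ x in ((S ∪ T).min' hne)..((S ∪ T).max' hne), |((heightFn S T x : ℝ))|)
          - ∑ i : Fin (S.card - T.card),
              ∫ x in ((S \ T.image f).orderEmbOfFin hR'card i)..((S ∪ T).max' hne),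
                relHeight S T ((i:ℤ)+1) x := by
      rw [intervalIntegral.integral_congr (fun y _ => hptA' y)]
      exact hkey'
    unfold levelProfit
    rw [Finset.sum_sub_distrib]
    have := hlowM
    rw [e1] at this
    linarith [hsplit', hsumM', hsumR', this]
  -- compare the extra-point profits
  have hcompare : ∀ i : Fin (S.card - T.card),
      levelProfit S T N ((S ∪ T).max' hne) ((i : ℤ) + 1)
          ((S \ T.image f).orderEmbOfFin hR'card i)
        ≤ levelProfit S T N ((S ∪ T).max' hne) ((i : ℤ) + 1) (r i) := by
    intro i
    refine levelProfit_le_max S T hdisj hne N hN (by omega) (hKbound i) (hmax' i) _ ?_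
    exact (Finset.mem_sdiff.mp (Finset.orderEmbOfFin_mem _ hR'card i)).1
  have hsumcomp : ∑ i : Fin (S.card - T.card),
      levelProfit S T N ((S ∪ T).max' hne) ((i : ℤ) + 1)
        ((S \ T.image f).orderEmbOfFin hR'card i)
      ≤ ∑ i : Fin (S.card - T.card),
          levelProfit S T N ((S ∪ T).max' hne) ((i : ℤ) + 1) (r i) :=
    Finset.sum_le_sum (fun i _ => hcompare i)
  rw [hupper]
  linarith [hlower, hsumcomp]
end

section
/- Let S and T be finite sets of real numbers with S ∩ T = ∅ and |S| > |T| ≥ 1. Let s, r ∈ S with s < r, let k be an integer, and suppose H(x) ≥ k for all x in the open interval (s, r). Then |s − N(s)| ≤ |r − N(r)| + ∫_{s}^{r} h^{k}(x) dx. -/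
open Finset MeasureTheory

/-- if `s, r ∈ S` with `s < r` and `H(x) ≥ k` on the open interval
`(s, r)`, then `|s − N(s)| ≤ |r − N(r)| + ∫_s^r h^k(x) dx`. -/
theorem nearest_neighbor_bound (S T : Finset ℝ)
    (hdisj : Disjoint S T) (hST : T.card < S.card) (hT : 1 ≤ T.card)
    (N : ℝ → ℝ) (hN : IsNearestNeighbor S T N)
    (s r : ℝ) (hsS : s ∈ S) (hrS : r ∈ S) (hsr : s < r)
    (k : ℤ) (hk : ∀ x ∈ Set.Ioo s r, k ≤ heightFn S T x) :
    |s - N s| ≤ |r - N r| + ∫ x in s..r, relHeight S T k x := by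
  have hint : (∫ x in s..r, relHeight S T k x) = r - s := by
    rw [intervalIntegral.integral_of_le hsr.le,
      MeasureTheory.integral_Ioc_eq_integral_Ioo]
    rw [MeasureTheory.setIntegral_congr_fun measurableSet_Ioo
      (g := fun _ => (1 : ℝ)) (fun x hx => by simp [relHeight, hk x hx])]
    simp [Real.volume_Ioo, hsr.le]
  rw [hint]
  obtain ⟨hNr, _⟩ := hN r hrS
  obtain ⟨_, hmin⟩ := hN s hsS
  calc |s - N s| ≤ |s - N r| := hmin _ hNr
    _ ≤ |s - r| + |r - N r| := by
        have := abs_sub_le s r (N r); linarith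
    _ ≤ |r - N r| + (r - s) := by
        rw [abs_sub_comm, abs_of_pos (by linarith)]; linarith
end
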